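/- arXiv:1710.07872 — 9 statements merged into one kernel-verified Lean document; each statement's English description precedes it below -/
import Mathlib

section
/- Let (X,d) be a metric space with dim_H(X) < ∞. Then H_loc(A) ≤ λ_loc(A) ≤ 4^{dim_H(X)} · H_loc(A) for every Borel set A; in particular the local Hausdorff measure H_loc and the local open spherical measure λ_loc are strongly equivalent. -/
/-!
A set `t` of small diameter lies in a ball `B` centred at one of its points with
`diam B ≤ 4 diam t` (if `t` is a single point, in any ball of diameter `≤ 1`). As `diam B ≤ 1`
and `dim_H t ≤ dim_H B < ∞`, the exponent can be lowered:
`diam B ^ dim_H B ≤ diam B ^ dim_H t ≤ 4 ^ dim_H X · diam t ^ dim_H t`. Replacing every set of a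
fine cover by such a ball therefore costs at most the factor `4 ^ dim_H X`, while the other
inequality holds because balls are among the admissible sets. Both comparisons hold for the
outer measures, hence for the measures on all sets, measurable or not.
-/

open MeasureTheory Metric
open scoped ENNReal

/-- The local Hausdorff measure: Carathéodory construction with
`τ(U) = diam(U)^{dim_H U}`. (Since `dim_H U ≤ dim_H X < ∞` under the hypotheses below,
the real exponent `(dimH U).toReal` is the Hausdorff dimension of `U`.) -/
noncomputable def locHausdorffMeasure (X : Type*) [MetricSpace X] [MeasurableSpace X]
    [BorelSpace X] : Measure X :=
  Measure.mkMetric' (fun U => EMetric.diam U ^ (dimH U).toReal)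

/-- The local open spherical measure: as `locHausdorffMeasure` but allowing only covers
by open balls. -/
noncomputable def locSphericalMeasure (X : Type*) [MetricSpace X] [MeasurableSpace X]
    [BorelSpace X] : Measure X :=
  Measure.mkMetric' (fun U =>
    ⨅ (x : X) (ρ : ℝ) (_ : U = Metric.ball x ρ), EMetric.diam U ^ (dimH U).toReal)

namespace MeasureTheory

variable {X : Type*} [EMetricSpace X]

theorem OuterMeasure.mkMetric'_mono {m₁ m₂ : Set X → ℝ≥0∞} (h : m₁ ≤ m₂) :
    OuterMeasure.mkMetric' m₁ ≤ OuterMeasure.mkMetric' m₂ :=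
  iSup₂_mono fun _ _ => mkMetric'.le_pre.2 fun t ht => (mkMetric'.pre_le ht).trans (h t)

theorem OuterMeasure.mkMetric'_le_smul_of_forall_exists {m₁ m₂ : Set X → ℝ≥0∞}
    {c : ℝ≥0∞} (hc₀ : c ≠ 0) (hc : c ≠ ⊤)
    (h : ∀ ε > 0, ∃ δ > 0, ∀ t : Set X, t.Nonempty → ediam t ≤ δ →
      ∃ u, t ⊆ u ∧ ediam u ≤ ε ∧ m₂ u ≤ c * m₁ t) :
    OuterMeasure.mkMetric' m₂ ≤ c • OuterMeasure.mkMetric' m₁ := by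
  intro s
  refine le_of_tendsto (mkMetric'.tendsto_pre m₂ s) ?_
  filter_upwards [self_mem_nhdsWithin] with ε (hε : 0 < ε)
  obtain ⟨δ, hδ, hcover⟩ := h ε hε
  have hpre : mkMetric'.pre m₂ ε ≤ c • mkMetric'.pre m₁ δ := by
    rw [show c • mkMetric'.pre m₁ δ =
      boundedBy (c • extend fun t (_ : ediam t ≤ δ) => m₁ t) from smul_boundedBy hc]
    refine le_boundedBy'.2 fun t ht => ?_
    by_cases htδ : ediam t ≤ δ
    · obtain ⟨u, htu, huε, hu⟩ := hcover t ht htδ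
      calc mkMetric'.pre m₂ ε t ≤ m₂ u := (measure_mono htu).trans (mkMetric'.pre_le huε)
        _ ≤ c * m₁ t := hu
        _ = (c • extend fun t (_ : ediam t ≤ δ) => m₁ t) t := by simp [extend, htδ]
    · simp [extend, htδ, hc₀]
  calc mkMetric'.pre m₂ ε s ≤ c * mkMetric'.pre m₁ δ s := hpre s
    _ ≤ c * OuterMeasure.mkMetric' m₁ s := by
      gcongr
      exact le_iSup₂ (f := fun r (_ : 0 < r) => mkMetric'.pre m₁ r) δ hδ

variable [MeasurableSpace X] [BorelSpace X]

theorem Measure.mkMetric'_le_smul_of_outer {m₁ m₂ : Set X → ℝ≥0∞} {c : ℝ≥0∞}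
    (h : OuterMeasure.mkMetric' m₂ ≤ c • OuterMeasure.mkMetric' m₁) :
    Measure.mkMetric' m₂ ≤ c • Measure.mkMetric' m₁ := by
  refine Measure.le_iff.2 fun s hs => ?_
  simp only [Measure.smul_apply, Measure.mkMetric', toMeasure_apply _ _ hs]
  exact h s

theorem Measure.mkMetric'_mono {m₁ m₂ : Set X → ℝ≥0∞} (h : m₁ ≤ m₂) :
    Measure.mkMetric' m₁ ≤ Measure.mkMetric' m₂ := by
  simpa using Measure.mkMetric'_le_smul_of_outer (c := 1)
    (by simpa using OuterMeasure.mkMetric'_mono h)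

end MeasureTheory

section

variable {X : Type*}

theorem Metric.exists_ball_superset_ediam_le_two_mul [PseudoMetricSpace X] {t : Set X} {x : X}
    (hx : x ∈ t) {r : ℝ≥0∞} (hr : r ≠ ⊤) (htr : ediam t < r) :
    ∃ ρ, t ⊆ ball x ρ ∧ ediam (ball x ρ) ≤ 2 * r := by
  refine ⟨r.toReal, fun y hy => mem_ball.2 <| edist_lt_ofReal.1 ?_, ?_⟩
  · rw [ENNReal.ofReal_toReal hr]
    exact (edist_le_ediam_of_mem hy hx).trans_lt htr
  · rw [← eball_ofReal, ENNReal.ofReal_toReal hr]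
    exact ediam_eball_le

theorem ediam_rpow_dimH_le_of_subset [EMetricSpace X] {t u : Set X} (htu : t ⊆ u)
    (hu₁ : ediam u ≤ 1) (hu : dimH u ≠ ⊤) {K : ℝ≥0∞} (hK : ediam u ≤ K * ediam t) :
    ediam u ^ (dimH u).toReal ≤ K ^ (dimH t).toReal * ediam t ^ (dimH t).toReal :=
  calc ediam u ^ (dimH u).toReal ≤ ediam u ^ (dimH t).toReal :=
        ENNReal.rpow_le_rpow_of_exponent_ge hu₁ (ENNReal.toReal_mono hu (dimH_mono htu))
    _ ≤ (K * ediam t) ^ (dimH t).toReal := by gcongr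
    _ = K ^ (dimH t).toReal * ediam t ^ (dimH t).toReal :=
        ENNReal.mul_rpow_of_nonneg _ _ ENNReal.toReal_nonneg

theorem exists_ball_superset_ediam_rpow_dimH_le [MetricSpace X]
    (hfin : dimH (Set.univ : Set X) ≠ ⊤) {t : Set X} (ht : t.Nonempty) {r : ℝ≥0∞}
    (hr₀ : r ≠ 0) (hr : r ≤ 4⁻¹) (htr : ediam t ≤ r) :
    ∃ x ρ, t ⊆ ball x ρ ∧ ediam (ball x ρ) ≤ 4 * r ∧
      ediam (ball x ρ) ^ (dimH (ball x ρ)).toReal ≤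
        4 ^ (dimH (Set.univ : Set X)).toReal * ediam t ^ (dimH t).toReal := by
  obtain ⟨x, hx⟩ := ht
  have hr_top : r ≠ ⊤ := ne_top_of_le_ne_top (by norm_num) hr
  have h4r : 4 * r ≤ 1 := by
    calc 4 * r ≤ 4 * 4⁻¹ := by gcongr
      _ = 1 := ENNReal.mul_inv_cancel (by norm_num) (by norm_num)
  rcases eq_or_ne (ediam t) 0 with ht₀ | ht₀
  · -- `t` is a point, of gauge `0 ^ 0 = 1`, and any ball of diameter `≤ 1` has gauge `≤ 1`
    obtain ⟨ρ, htB, hB⟩ :=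
      exists_ball_superset_ediam_le_two_mul hx hr_top (ht₀ ▸ pos_iff_ne_zero.2 hr₀)
    have hB₄ : ediam (ball x ρ) ≤ 4 * r := hB.trans (by gcongr; norm_num)
    refine ⟨x, ρ, htB, hB₄, ?_⟩
    rw [ht₀, dimH_subsingleton (ediam_eq_zero_iff.1 ht₀), ENNReal.toReal_zero,
      ENNReal.rpow_zero, mul_one]
    exact (ENNReal.rpow_le_one (hB₄.trans h4r) ENNReal.toReal_nonneg).trans
      ((ENNReal.rpow_zero (x := 4)).symm.le.trans
        (ENNReal.rpow_le_rpow_of_exponent_le (by norm_num) ENNReal.toReal_nonneg))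
  · have ht_top : ediam t ≠ ⊤ := ne_top_of_le_ne_top hr_top htr
    have ht_lt : ediam t < 2 * ediam t :=
      (ENNReal.lt_add_right ht_top ht₀).trans_eq (two_mul _).symm
    obtain ⟨ρ, htB, hB⟩ :=
      exists_ball_superset_ediam_le_two_mul hx (ENNReal.mul_ne_top (by norm_num) ht_top) ht_lt
    have hB₄ : ediam (ball x ρ) ≤ 4 * ediam t := hB.trans_eq (by rw [← mul_assoc]; norm_num)
    refine ⟨x, ρ, htB, hB₄.trans (by gcongr), ?_⟩
    have hB₁ : ediam (ball x ρ) ≤ 1 :=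
      hB₄.trans ((by gcongr : 4 * ediam t ≤ 4 * r).trans h4r)
    calc _ ≤ 4 ^ (dimH t).toReal * ediam t ^ (dimH t).toReal :=
          ediam_rpow_dimH_le_of_subset htB hB₁
            (ne_top_of_le_ne_top hfin (dimH_mono (Set.subset_univ _))) hB₄
      _ ≤ 4 ^ (dimH (Set.univ : Set X)).toReal * ediam t ^ (dimH t).toReal := by
          gcongr ?_ * _
          exact ENNReal.rpow_le_rpow_of_exponent_le (by norm_num)
            (ENNReal.toReal_mono hfin (dimH_mono t.subset_univ))

end

theorem statement3_general {X : Type*} [MetricSpace X] [MeasurableSpace X] [BorelSpace X]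
    (hfin : dimH (Set.univ : Set X) ≠ ⊤) (A : Set X) :
    locHausdorffMeasure X A ≤ locSphericalMeasure X A ∧
      locSphericalMeasure X A ≤
        (4 : ℝ≥0∞) ^ (dimH (Set.univ : Set X)).toReal * locHausdorffMeasure X A := by
  refine ⟨Measure.mkMetric'_mono (fun U => le_iInf₂ fun _ _ => le_iInf fun _ => le_rfl) A, ?_⟩
  have hc₀ : (4 : ℝ≥0∞) ^ (dimH (Set.univ : Set X)).toReal ≠ 0 := by positivity
  have hc : (4 : ℝ≥0∞) ^ (dimH (Set.univ : Set X)).toReal ≠ ⊤ :=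
    ENNReal.rpow_ne_top_of_nonneg ENNReal.toReal_nonneg (by norm_num)
  refine Measure.mkMetric'_le_smul_of_outer
    (OuterMeasure.mkMetric'_le_smul_of_forall_exists hc₀ hc fun ε hε => ?_) A
  have hδ : 0 < min (ε / 4) 4⁻¹ := lt_min (ENNReal.div_pos hε.ne' (by norm_num)) (by norm_num)
  refine ⟨min (ε / 4) 4⁻¹, hδ, fun t ht htδ => ?_⟩
  obtain ⟨x, ρ, htB, hB, hgauge⟩ :=
    exists_ball_superset_ediam_rpow_dimH_le hfin ht hδ.ne' (min_le_right _ _) htδ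
  refine ⟨ball x ρ, htB, hB.trans ?_, (iInf₂_le x ρ).trans ((iInf_le _ rfl).trans hgauge)⟩
  calc 4 * min (ε / 4) 4⁻¹ ≤ 4 * (ε / 4) := by gcongr; exact min_le_left _ _
    _ = ε := ENNReal.mul_div_cancel (by norm_num) (by norm_num)

theorem statement3 {X : Type*} [MetricSpace X] [MeasurableSpace X] [BorelSpace X]
    (hfin : dimH (Set.univ : Set X) ≠ ⊤) (A : Set X) (hA : MeasurableSet A) :
    locHausdorffMeasure X A ≤ locSphericalMeasure X A ∧
      locSphericalMeasure X A ≤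
        (4 : ℝ≥0∞) ^ (dimH (Set.univ : Set X)).toReal * locHausdorffMeasure X A :=
  statement3_general hfin A
end

section
/- Let X be a separable metric space with d₀ := dim_H(X) < ∞, and let A := {x ∈ X : α(x) < d₀}. Then H^{d₀}(A) = 0; in particular H^{d₀}(X) = H^{d₀}({x ∈ X : α(x) = d₀}). -/
/- STATEMENT 5: Let X be a separable metric space with d₀ := dim_H(X) < ∞ and let
   A := {x ∈ X : α(x) < d₀}, where α is the local Hausdorff dimension. Then
   H^{d₀}(A) = 0; in particular H^{d₀}(X) = H^{d₀}({x : α(x) = d₀}).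
   (For metric spaces, separability is the same as second countability.) -/

open MeasureTheory Metric
open scoped ENNReal

/-- The local Hausdorff dimension `α(x) = inf_{ε > 0} dim_H (B_ε(x))`. -/
noncomputable def localDimH {X : Type*} [MetricSpace X] (x : X) : ℝ≥0∞ :=
  ⨅ (ε : ℝ) (_ : 0 < ε), dimH (Metric.ball x ε)

theorem statement5 {X : Type*} [MetricSpace X] [SecondCountableTopology X]
    [MeasurableSpace X] [BorelSpace X]
    (hfin : dimH (Set.univ : Set X) ≠ ⊤) :
    μH[(dimH (Set.univ : Set X)).toReal] {x : X | localDimH x < dimH (Set.univ : Set X)} = 0 ∧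
    μH[(dimH (Set.univ : Set X)).toReal] (Set.univ : Set X) =
      μH[(dimH (Set.univ : Set X)).toReal] {x : X | localDimH x = dimH (Set.univ : Set X)} := by
  set d₀ := dimH (Set.univ : Set X) with hd₀
  set A := {x : X | localDimH x < d₀} with hA
  have hle : ∀ x : X, localDimH x ≤ d₀ := by
    intro x
    calc localDimH x ≤ dimH (Metric.ball x 1) := iInf₂_le 1 one_pos
      _ ≤ d₀ := dimH_mono (Set.subset_univ _)
  have hnull : μH[d₀.toReal] A = 0 := by
    apply measure_null_of_locally_null
    intro x hx
    simp only [hA, Set.mem_setOf_eq, localDimH] at hx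
    rw [iInf_lt_iff] at hx
    obtain ⟨ε, hε⟩ := hx
    rw [iInf_lt_iff] at hε
    obtain ⟨hεpos, hlt⟩ := hε
    refine ⟨Metric.ball x ε, ?_, ?_⟩
    · exact nhdsWithin_le_nhds (Metric.ball_mem_nhds x hεpos)
    · apply hausdorffMeasure_of_dimH_lt
      rwa [ENNReal.coe_toNNReal hfin]
  refine ⟨hnull, ?_⟩
  have heq : {x : X | localDimH x = d₀} = Set.univ \ A := by
    ext x
    simp only [Set.mem_setOf_eq, Set.mem_diff, Set.mem_univ, true_and, hA,
      Set.mem_setOf_eq, not_lt]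
    constructor
    · intro h; exact h.ge
    · intro h; exact le_antisymm (hle x) h
  rw [heq, measure_diff_null hnull]
end

section
/- Let X be a non-empty separable metric space. Then dim_H(X) = sup_{x ∈ X} α(x). Moreover, if X is compact, the supremum is attained: there exists x ∈ X with α(x) = dim_H(X). -/
/- STATEMENT 6: Let X be a non-empty separable metric space. Then
   dim_H(X) = sup_{x ∈ X} α(x), where α is the local Hausdorff dimension. Moreover, if
   X is compact, the supremum is attained: there is x with α(x) = dim_H(X).
   (For metric spaces, separability is the same as second countability.) -/

open MeasureTheory Metric
open scoped ENNReal

/-!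
Balls form a neighbourhood basis and `dimH` is monotone, so `α(x)` is the infimum of `dim_H`
over all neighbourhoods of `x`. The inequality `dim_H X ≤ sup α` is then the
countable-cover argument of `exists_mem_nhdsWithin_lt_dimH_of_lt_dimH`. The same description
shows that `α` is upper semicontinuous (a neighbourhood of `x` is a neighbourhood of every
nearby point), so on a compact space it attains its supremum.
-/

open Filter Topology Set

section

variable {X : Type*} [MetricSpace X]

theorem localDimH_eq_iInf_nhds (x : X) : localDimH x = ⨅ s ∈ 𝓝 x, dimH s := by
  refine le_antisymm (le_iInf₂ fun s hs => ?_)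
    (le_iInf₂ fun ε hε => iInf₂_le _ (ball_mem_nhds x hε))
  obtain ⟨ε, hε, hball⟩ := Metric.mem_nhds_iff.1 hs
  exact (iInf₂_le ε hε).trans (dimH_mono hball)

theorem localDimH_le_dimH {x : X} {s : Set X} (hs : s ∈ 𝓝 x) : localDimH x ≤ dimH s := by
  rw [localDimH_eq_iInf_nhds]
  exact iInf₂_le s hs

theorem le_localDimH_of_forall_lt_dimH {x : X} {r : ℝ≥0∞} (h : ∀ s ∈ 𝓝 x, r < dimH s) :
    r ≤ localDimH x := by
  rw [localDimH_eq_iInf_nhds]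
  exact le_iInf₂ fun s hs => (h s hs).le

theorem upperSemicontinuous_localDimH : UpperSemicontinuous (localDimH : X → ℝ≥0∞) := by
  intro x r hr
  rw [localDimH_eq_iInf_nhds] at hr
  obtain ⟨s, hs, hsr⟩ := by simpa only [iInf_lt_iff, exists_prop] using hr
  filter_upwards [eventually_mem_nhds_iff.2 hs] with y hy
  exact (localDimH_le_dimH hy).trans_lt hsr

theorem iSup_localDimH [SecondCountableTopology X] :
    ⨆ x : X, localDimH x = dimH (univ : Set X) := by
  refine le_antisymm (iSup_le fun x => localDimH_le_dimH univ_mem)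
    (le_of_forall_lt_imp_le_of_dense fun r hr => ?_)
  obtain ⟨x, -, hx⟩ := exists_mem_nhdsWithin_lt_dimH_of_lt_dimH hr
  rw [nhdsWithin_univ] at hx
  exact (le_localDimH_of_forall_lt_dimH hx).trans (le_iSup localDimH x)

theorem exists_localDimH_eq_iSup [CompactSpace X] [Nonempty X] :
    ∃ x : X, localDimH x = ⨆ y : X, localDimH y := by
  obtain ⟨x, -, hmax⟩ :=
    ((upperSemicontinuous_localDimH (X := X)).upperSemicontinuousOn univ).exists_isMaxOn
      univ_nonempty isCompact_univ
  exact ⟨x, le_antisymm (le_iSup localDimH x) (iSup_le fun y => hmax (mem_univ y))⟩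

end

theorem statement6 {X : Type*} [MetricSpace X] [SecondCountableTopology X] [Nonempty X] :
    (dimH (Set.univ : Set X) = ⨆ x : X, localDimH x) ∧
    (CompactSpace X → ∃ x : X, localDimH x = dimH (Set.univ : Set X)) := by
  refine ⟨iSup_localDimH.symm, fun _ => ?_⟩
  obtain ⟨x, hx⟩ := exists_localDimH_eq_iSup (X := X)
  exact ⟨x, hx.trans iSup_localDimH⟩
end

section
/- Let X be a compact metric space and Q : X → [0,∞) continuous, and suppose X is Q-amenable, that is, 0 < λ^{Q_c}(B) < ∞ for every non-empty open ball B of finite radius in X. Then α(x) = Q(x) for all x ∈ X. -/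
/- STATEMENT 7: Let X be a compact metric space and Q : X → [0,∞) continuous, and
   suppose X is Q-amenable: 0 < λ^{Q_c}(B) < ∞ for every non-empty open ball B of
   finite radius. Then α(x) = Q(x) for all x, where α is the local Hausdorff dimension
   and λ^{Q_c} is the Carathéodory construction over covers by open balls with
   designated centers, with weight diam(B_ρ(x))^{Q(x)}. -/

open MeasureTheory Metric
open scoped ENNReal

/-- The measure `λ^{Q_c}`: Carathéodory construction over covers by open balls with
designated centers, a ball with designated center `x` receiving weight
`diam(B)^{Q(x)}`. (Taking the infimum over all representations of a set as a centered
open ball is the same as allowing designated centers in covers; sets that are not open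
balls get weight `∞`, i.e. are disallowed.) -/
noncomputable def lambdaQc {X : Type*} [MetricSpace X] [MeasurableSpace X] [BorelSpace X]
    (Q : X → ℝ) : Measure X :=
  Measure.mkMetric' (fun U =>
    ⨅ (x : X) (ρ : ℝ) (_ : U = Metric.ball x ρ), EMetric.diam U ^ Q x)

/-! Near `x`, continuity of `Q` gives `p ≤ Q ≤ p'` with `p, p'` arbitrarily close to `Q x`.
A small centred ball meeting `B_ε(x)` has its centre where `Q ≤ p'` and diameter `≤ 1`, so its
weight dominates `diam ^ p'`; hence `μH[p'] ≤ λ^{Q_c} < ∞` on the ball and `dim_H ≤ p'`.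
Conversely, a cover witnessing `μH[p] = 0` can be fattened into centred balls of comparable
diameter, whose weights are at most `diam ^ p`; so `dim_H < p` would force `λ^{Q_c} = 0`. -/

open scoped NNReal

noncomputable def centeredBallWeight {X : Type*} [MetricSpace X] (Q : X → ℝ) (U : Set X) :
    ℝ≥0∞ :=
  ⨅ (x : X) (ρ : ℝ) (_ : U = ball x ρ), ediam U ^ Q x

lemma ENNReal.add_rpow_le_two_rpow_mul {p : ℝ} (hp : 0 ≤ p) (a b : ℝ≥0∞) :
    (a + b) ^ p ≤ 2 ^ p * (a ^ p + b ^ p) := by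
  wlog hab : a ≤ b generalizing a b
  · simpa only [add_comm] using this b a (le_of_not_ge hab)
  calc (a + b) ^ p ≤ (2 * b) ^ p := by gcongr; rw [two_mul]; gcongr
    _ = 2 ^ p * b ^ p := ENNReal.mul_rpow_of_nonneg _ _ hp
    _ ≤ 2 ^ p * (a ^ p + b ^ p) := by gcongr; exact le_add_self

lemma ENNReal.exists_pos_le_tsum_rpow_lt {p : ℝ} (hp : 0 < p) {a η : ℝ≥0∞} (ha : 0 < a)
    (hη : η ≠ 0) : ∃ δ : ℕ → ℝ≥0∞, (∀ n, 0 < δ n ∧ δ n ≤ a) ∧ ∑' n, δ n ^ p < η := by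
  obtain ⟨ε, hε0, hε⟩ := ENNReal.exists_pos_sum_of_countable hη ℕ
  refine ⟨fun n => min ((ε n : ℝ≥0∞) ^ p⁻¹) a, fun n => ⟨lt_min ?_ ha, min_le_right _ _⟩,
    lt_of_le_of_lt (ENNReal.tsum_le_tsum fun n => ?_) hε⟩
  · exact ENNReal.rpow_pos (ENNReal.coe_pos.2 (hε0 n)) ENNReal.coe_ne_top
  · calc min ((ε n : ℝ≥0∞) ^ p⁻¹) a ^ p ≤ ((ε n : ℝ≥0∞) ^ p⁻¹) ^ p := by
          gcongr; exact min_le_left _ _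
      _ = ε n := ENNReal.rpow_inv_rpow hp.ne' _

section

variable {X : Type*} [MetricSpace X] {Q : X → ℝ}

open OuterMeasure

lemma centeredBallWeight_ball_le (x : X) (ρ : ℝ) :
    centeredBallWeight Q (ball x ρ) ≤ ediam (ball x ρ) ^ Q x :=
  iInf₂_le_of_le x ρ (iInf_le _ rfl)

lemma mkMetric'_pre_ediam_rpow_le_pre_centeredBallWeight {p ε : ℝ} (hp : 0 ≤ p) {s : Set X}
    (hQ : ∀ y ∈ thickening ε s, Q y ≤ p) {r : ℝ≥0∞} (hr1 : r ≤ 1) (hrε : r < ENNReal.ofReal ε) :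
    mkMetric'.pre (fun t => ediam t ^ p) r s ≤ mkMetric'.pre (centeredBallWeight Q) r s := by
  suffices h : (mkMetric'.pre (fun t => ediam t ^ p) r).restrict s
      ≤ mkMetric'.pre (centeredBallWeight Q) r by
    simpa using h s
  refine mkMetric'.le_pre.2 fun U hU => le_iInf₂ fun c ρ => le_iInf fun hUc => ?_
  subst hUc
  rw [restrict_apply]
  rcases (ball c ρ ∩ s).eq_empty_or_nonempty with hempty | ⟨z, hzU, hzs⟩
  · simp [hempty]
  have hc : c ∈ ball c ρ := mem_ball_self (nonempty_ball.1 ⟨z, hzU⟩)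
  have hcz : edist c z < ENNReal.ofReal ε :=
    ((edist_le_ediam_of_mem hc hzU).trans hU).trans_lt hrε
  have hQc : Q c ≤ p := hQ c (mem_thickening_iff.2 ⟨z, hzs, edist_lt_ofReal.1 hcz⟩)
  calc mkMetric'.pre (fun t => ediam t ^ p) r (ball c ρ ∩ s) ≤ ediam (ball c ρ ∩ s) ^ p :=
        mkMetric'.pre_le ((ediam_mono Set.inter_subset_left).trans hU)
    _ ≤ ediam (ball c ρ) ^ p := by gcongr; exact Set.inter_subset_left
    _ ≤ ediam (ball c ρ) ^ Q c := ENNReal.rpow_le_rpow_of_exponent_ge (hU.trans hr1) hQc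

/-- The slack `δ` is needed because `t ∩ s` may be a single point, which lies in no ball of
radius `ediam (t ∩ s) = 0`. -/
lemma mkMetric'_pre_centeredBallWeight_inter_le {p : ℝ} (hp : 0 < p) {s t : Set X}
    (hQ : ∀ y ∈ s, p ≤ Q y) {r δ : ℝ≥0∞} (hr : r ≤ 1) (ht : ediam t ≤ r / 4) (hδ0 : 0 < δ)
    (hδ : δ ≤ r / 4) :
    mkMetric'.pre (centeredBallWeight Q) r (t ∩ s)
      ≤ 4 ^ p * ((⨆ _ : t.Nonempty, ediam t ^ p) + δ ^ p) := by
  rcases (t ∩ s).eq_empty_or_nonempty with hempty | ⟨c, hct, hcs⟩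
  · simp [hempty]
  have hr4 : r / 4 ≠ ⊤ := ENNReal.div_ne_top (hr.trans_lt ENNReal.one_lt_top).ne (by norm_num)
  have hdδ : ediam t + δ ≠ ⊤ := ENNReal.add_ne_top.2 ⟨(ht.trans_lt hr4.lt_top).ne,
    (hδ.trans_lt hr4.lt_top).ne⟩
  set ρ := (ediam t + δ).toReal
  have hρ : ENNReal.ofReal ρ = ediam t + δ := ENNReal.ofReal_toReal hdδ
  have hsub : t ∩ s ⊆ ball c ρ := fun z hz => edist_lt_ofReal.1 <| by
    rw [hρ]
    exact (edist_le_ediam_of_mem hz.1 hct).trans_lt (ENNReal.lt_add_right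
      (ht.trans_lt hr4.lt_top).ne hδ0.ne')
  have hdiam : ediam (ball c ρ) ≤ 2 * (ediam t + δ) := by
    rw [← eball_ofReal, hρ]; exact ediam_eball_le
  have hdiam_r : ediam (ball c ρ) ≤ r := by
    calc ediam (ball c ρ) ≤ 2 * (r / 4 + r / 4) := hdiam.trans (by gcongr)
      _ = r := by
        rw [← two_mul, ← mul_assoc, show (2 : ℝ≥0∞) * 2 = 4 by norm_num,
          ENNReal.mul_div_cancel (by norm_num) (by norm_num)]
  calc mkMetric'.pre (centeredBallWeight Q) r (t ∩ s)
      ≤ mkMetric'.pre (centeredBallWeight Q) r (ball c ρ) := measure_mono hsub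
    _ ≤ centeredBallWeight Q (ball c ρ) := mkMetric'.pre_le hdiam_r
    _ ≤ ediam (ball c ρ) ^ Q c := centeredBallWeight_ball_le c ρ
    _ ≤ ediam (ball c ρ) ^ p := ENNReal.rpow_le_rpow_of_exponent_ge (hdiam_r.trans hr) (hQ c hcs)
    _ ≤ (2 * (ediam t + δ)) ^ p := by gcongr
    _ ≤ 4 ^ p * (ediam t ^ p + δ ^ p) := by
      rw [ENNReal.mul_rpow_of_nonneg _ _ hp.le]
      calc 2 ^ p * (ediam t + δ) ^ p ≤ 2 ^ p * (2 ^ p * (ediam t ^ p + δ ^ p)) := by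
            gcongr; exact ENNReal.add_rpow_le_two_rpow_mul hp.le _ _
        _ = 4 ^ p * (ediam t ^ p + δ ^ p) := by
            rw [← mul_assoc, ← ENNReal.mul_rpow_of_nonneg _ _ hp.le]; norm_num
    _ ≤ 4 ^ p * ((⨆ _ : t.Nonempty, ediam t ^ p) + δ ^ p) := by
      gcongr; exact le_iSup_of_le ⟨c, hct⟩ le_rfl

variable [MeasurableSpace X] [BorelSpace X]

lemma lambdaQc_apply {s : Set X} (hs : MeasurableSet s) :
    lambdaQc Q s = mkMetric' (centeredBallWeight Q) s := by
  rw [lambdaQc, Measure.mkMetric', toMeasure_apply _ _ hs]; rfl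

lemma hausdorffMeasure_apply_eq_mkMetric' (p : ℝ) (s : Set X) :
    μH[p] s = mkMetric' (fun t => ediam t ^ p) s := by
  rw [Measure.hausdorffMeasure, ← OuterMeasure.coe_mkMetric]; rfl

lemma hausdorffMeasure_le_lambdaQc {p ε : ℝ} (hp : 0 ≤ p) (hε : 0 < ε) {s : Set X}
    (hs : MeasurableSet s) (hQ : ∀ y ∈ thickening ε s, Q y ≤ p) :
    μH[p] s ≤ lambdaQc Q s := by
  rw [lambdaQc_apply hs, hausdorffMeasure_apply_eq_mkMetric']
  refine le_of_tendsto_of_tendsto (mkMetric'.tendsto_pre _ s) (mkMetric'.tendsto_pre _ s) ?_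
  have hpos : (0 : ℝ≥0∞) < min (ENNReal.ofReal ε) 1 := lt_min (ENNReal.ofReal_pos.2 hε) one_pos
  filter_upwards [Ioo_mem_nhdsGT hpos] with r hr
  exact mkMetric'_pre_ediam_rpow_le_pre_centeredBallWeight hp hQ
    (hr.2.le.trans (min_le_right _ _)) (hr.2.trans_le (min_le_left _ _))

lemma lambdaQc_eq_zero_of_hausdorffMeasure_eq_zero {p : ℝ} (hp : 0 < p) {s : Set X}
    (hs : MeasurableSet s) (hQ : ∀ y ∈ s, p ≤ Q y) (hμ : μH[p] s = 0) : lambdaQc Q s = 0 := by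
  rw [lambdaQc_apply hs]
  refine le_antisymm ?_ zero_le
  simp only [mkMetric', iSup_apply]
  refine iSup₂_le fun r hr => ?_
  wlog hr1 : r ≤ 1 generalizing r
  · exact (mkMetric'.mono_pre _ (min_le_left r 1) s).trans
      (this _ (lt_min hr one_pos) (min_le_right _ _))
  have hr4 : 0 < r / 4 := ENNReal.div_pos hr.ne' (by norm_num)
  refine ENNReal.le_of_forall_pos_le_add fun ε hε _ => ?_
  obtain ⟨η, hη, hηε⟩ : ∃ η : ℝ≥0, 0 < η ∧ η * ((4 : ℝ≥0∞) ^ p * 2) < ε :=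
    ENNReal.exists_nnreal_pos_mul_lt (ENNReal.mul_ne_top
      (ENNReal.rpow_ne_top_of_nonneg hp.le ENNReal.ofNat_ne_top) ENNReal.ofNat_ne_top)
      (ENNReal.coe_ne_zero.2 hε.ne')
  have hη0 : (η : ℝ≥0∞) ≠ 0 := by exact_mod_cast hη.ne'
  have hcover : ⨅ (t : ℕ → Set X) (_ : s ⊆ ⋃ n, t n) (_ : ∀ n, ediam (t n) ≤ r / 4),
      ∑' n, ⨆ _ : (t n).Nonempty, ediam (t n) ^ p < η := by
    rw [Measure.hausdorffMeasure_apply, ENNReal.iSup_eq_zero] at hμ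
    rw [ENNReal.iSup_eq_zero.1 (hμ (r / 4)) hr4]
    exact pos_iff_ne_zero.2 hη0
  simp only [iInf_lt_iff] at hcover
  obtain ⟨t, hst, ht, htη⟩ := hcover
  obtain ⟨δ, hδ, hδη⟩ := ENNReal.exists_pos_le_tsum_rpow_lt hp hr4 hη0
  calc mkMetric'.pre (centeredBallWeight Q) r s
      ≤ mkMetric'.pre (centeredBallWeight Q) r (⋃ n, t n ∩ s) := by
        refine measure_mono fun z hz => ?_
        obtain ⟨n, hn⟩ := Set.mem_iUnion.1 (hst hz)
        exact Set.mem_iUnion.2 ⟨n, hn, hz⟩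
    _ ≤ ∑' n, mkMetric'.pre (centeredBallWeight Q) r (t n ∩ s) := measure_iUnion_le _
    _ ≤ ∑' n, 4 ^ p * ((⨆ _ : (t n).Nonempty, ediam (t n) ^ p) + δ n ^ p) :=
        ENNReal.tsum_le_tsum fun n => mkMetric'_pre_centeredBallWeight_inter_le hp hQ hr1 (ht n)
          (hδ n).1 (hδ n).2
    _ = 4 ^ p * ((∑' n, ⨆ _ : (t n).Nonempty, ediam (t n) ^ p) + ∑' n, δ n ^ p) := by
        rw [ENNReal.tsum_mul_left, ENNReal.tsum_add]
    _ ≤ 4 ^ p * (η + η) := by gcongr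
    _ = η * (4 ^ p * 2) := by ring
    _ ≤ 0 + ε := by rw [zero_add]; exact hηε.le

lemma localDimH_le_of_lambdaQc_ball_lt_top {x : X} (hQ : ContinuousAt Q x)
    (hfin : ∀ ε > 0, lambdaQc Q (ball x ε) < ⊤) : localDimH x ≤ ENNReal.ofReal (Q x) := by
  refine ENNReal.le_of_forall_pos_le_add fun η hη _ => ?_
  obtain ⟨δ, hδ, hQδ⟩ := eventually_nhds_iff_ball.1
    (hQ.eventually (gt_mem_nhds (lt_add_of_pos_right (Q x) (NNReal.coe_pos.2 hη))))
  set p : ℝ≥0 := (Q x + η).toNNReal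
  have hQp : ∀ y ∈ thickening (δ / 2) (ball x (δ / 2)), Q y ≤ p := fun y hy =>
    (hQδ y (by simpa using thickening_ball x (δ / 2) (δ / 2) hy)).le.trans (Real.le_coe_toNNReal _)
  have hμ : μH[p] (ball x (δ / 2)) ≠ ⊤ :=
    ((hausdorffMeasure_le_lambdaQc p.2 (half_pos hδ) measurableSet_ball hQp).trans_lt
      (hfin _ (half_pos hδ))).ne
  calc localDimH x ≤ dimH (ball x (δ / 2)) := iInf₂_le _ (half_pos hδ)
    _ ≤ p := dimH_le_of_hausdorffMeasure_ne_top hμ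
    _ = ENNReal.ofReal (Q x + η) := rfl
    _ ≤ ENNReal.ofReal (Q x) + ENNReal.ofReal η := ENNReal.ofReal_add_le
    _ = ENNReal.ofReal (Q x) + η := by rw [ENNReal.ofReal_coe_nnreal]

lemma ofReal_le_localDimH_of_lambdaQc_ball_pos {x : X} (hQ : ContinuousAt Q x)
    (hpos : ∀ ε > 0, 0 < lambdaQc Q (ball x ε)) : ENNReal.ofReal (Q x) ≤ localDimH x := by
  refine le_iInf₂ fun ε hε => le_of_not_gt fun hlt => ?_
  obtain ⟨p, hdim, hpQ⟩ := ENNReal.lt_iff_exists_nnreal_btwn.1 hlt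
  have hp : 0 < (p : ℝ) := by exact_mod_cast ENNReal.coe_pos.1 (hdim.trans_le' zero_le)
  obtain ⟨δ, hδ, hQδ⟩ := eventually_nhds_iff_ball.1
    (hQ.eventually (lt_mem_nhds (by simpa using hpQ : (p : ℝ) < Q x)))
  have hμ : μH[p] (ball x (min ε δ)) = 0 :=
    hausdorffMeasure_of_dimH_lt ((dimH_mono (ball_subset_ball (min_le_left _ _))).trans_lt hdim)
  have hzero := lambdaQc_eq_zero_of_hausdorffMeasure_eq_zero hp measurableSet_ball
    (fun y hy => (hQδ y (ball_subset_ball (min_le_right _ _) hy)).le) hμ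
  exact (hpos _ (lt_min hε hδ)).ne' hzero

end

theorem statement7_general {X : Type*} [MetricSpace X]
    [MeasurableSpace X] [BorelSpace X]
    (Q : X → ℝ) (hQcont : Continuous Q)
    (hamen : ∀ (x : X) (ρ : ℝ), 0 < ρ →
      0 < lambdaQc Q (Metric.ball x ρ) ∧ lambdaQc Q (Metric.ball x ρ) < ⊤) :
    ∀ x : X, localDimH x = ENNReal.ofReal (Q x) := fun x =>
  le_antisymm
    (localDimH_le_of_lambdaQc_ball_lt_top hQcont.continuousAt fun ε hε => (hamen x ε hε).2)
    (ofReal_le_localDimH_of_lambdaQc_ball_pos hQcont.continuousAt fun ε hε => (hamen x ε hε).1)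

theorem statement7 {X : Type*} [MetricSpace X] [CompactSpace X]
    [MeasurableSpace X] [BorelSpace X]
    (Q : X → ℝ) (hQ0 : ∀ x, 0 ≤ Q x) (hQcont : Continuous Q)
    (hamen : ∀ (x : X) (ρ : ℝ), 0 < ρ →
      0 < lambdaQc Q (Metric.ball x ρ) ∧ lambdaQc Q (Metric.ball x ρ) < ⊤) :
    ∀ x : X, localDimH x = ENNReal.ofReal (Q x) :=
  statement7_general Q hQcont hamen
end

section
/- Let X be a compact metric space and Q : X → (0,∞) log-Hölder continuous. For an open ball B set Q⁻(B) := inf_{x∈B} Q(x) and Q⁺(B) := sup_{x∈B} Q(x), and let Q̃ be any function from open balls to [0,∞) with Q⁻(B) ≤ Q̃(B) ≤ Q⁺(B) for all open balls B. For σ ∈ {Q⁺, Q⁻, Q̃} define the Borel measure λ^σ(A) := sup_{δ>0} inf{ Σ_i diam(B_i)^{σ(B_i)} : (B_i)_i an at most countable cover of A by open balls with diam(B_i) ≤ δ }. Then λ^{Q⁺}, λ^{Q⁻}, λ^{Q̃} are pairwise strongly equivalent. -/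
/- STATEMENT 8: Let X be a compact metric space and Q : X → (0,∞) log-Hölder continuous.
   For an open ball B set Q⁻(B) := inf_{x∈B} Q x and Q⁺(B) := sup_{x∈B} Q x, and let Q̃
   be any [0,∞)-valued function of open balls with Q⁻(B) ≤ Q̃(B) ≤ Q⁺(B). For
   σ ∈ {Q⁺, Q⁻, Q̃} let λ^σ be the Carathéodory-construction Borel measure from covers
   by open balls B with weight diam(B)^{σ(B)}. Then λ^{Q⁺}, λ^{Q⁻}, λ^{Q̃} are pairwise
   strongly equivalent. -/

open MeasureTheory Metric
open scoped ENNReal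

/-- Strong equivalence of Borel measures: `ν E / C ≤ μ E ≤ C · ν E` for all Borel `E`. -/
def StrongEquiv {X : Type*} [MeasurableSpace X] (μ ν : Measure X) : Prop :=
  ∃ C : ℝ≥0∞, 0 < C ∧ C ≠ ⊤ ∧
    ∀ E : Set X, MeasurableSet E → ν E / C ≤ μ E ∧ μ E ≤ C * ν E

/-- `Q` is log-Hölder continuous: `|Q x − Q y| ≤ −C / log (d(x,y))` whenever
`0 < d(x,y) < 1/2`. -/
def LogHolder {X : Type*} [MetricSpace X] (Q : X → ℝ) : Prop :=
  ∃ C : ℝ, 0 < C ∧ ∀ x y : X, 0 < dist x y → dist x y < 1 / 2 →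
    |Q x - Q y| ≤ C / (-Real.log (dist x y))

/-- The Carathéodory-construction measure from covers by open balls, the ball
`B = B_ρ(x)` receiving weight `diam(B)^{σ x ρ}` (exponent a function of the ball,
given via a designated representation; non-balls are disallowed). -/
noncomputable def lambdaExp {X : Type*} [MetricSpace X] [MeasurableSpace X] [BorelSpace X]
    (σ : X → ℝ → ℝ) : Measure X :=
  Measure.mkMetric' (fun U =>
    ⨅ (x : X) (ρ : ℝ) (_ : U = Metric.ball x ρ), EMetric.diam U ^ σ x ρ)

/-! On a set of diameter `D < 1/2`, a function `Q` that is log-Hölder with constant `C` oscillates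
by at most `C / (-log D)`, and `D ^ (-C / (-log D)) = e ^ C`. So moving the exponent of a small
ball `B` anywhere within `[Q⁻(B), Q⁺(B)]` changes its weight `diam(B) ^ σ(B)` by a factor at most
`e ^ C`, and the Carathéodory constructions, which only see small balls, differ by the same
factor. -/

theorem ENNReal.rpow_le_exp_mul_rpow {D : ℝ≥0∞} (hD : D < 1) {C a b : ℝ} (hC : 0 ≤ C)
    (h : b - a ≤ C / -Real.log D.toReal) :
    D ^ a ≤ ENNReal.ofReal (Real.exp C) * D ^ b := by
  have hK : 1 ≤ ENNReal.ofReal (Real.exp C) := ENNReal.one_le_ofReal.2 (Real.one_le_exp hC)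
  rcases eq_or_ne D 0 with rfl | hD₀
  · -- `Real.log 0 = 0` and `C / 0 = 0`, so here the hypothesis reads `b ≤ a`
    have hba : b ≤ a := by simpa using h
    exact (ENNReal.rpow_le_rpow_of_exponent_ge hD.le hba).trans (le_mul_of_one_le_left' hK)
  have hDtop : D ≠ ∞ := hD.ne_top
  have hd₀ : 0 < D.toReal := ENNReal.toReal_pos hD₀ hDtop
  have hlog : 0 < -Real.log D.toReal :=
    neg_pos.2 (Real.log_neg hd₀ (ENNReal.toReal_lt_of_lt_ofReal (by simpa using hD)))
  have hexp : (a - b) * Real.log D.toReal ≤ C := by linarith [(le_div_iff₀ hlog).1 h]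
  calc D ^ a = D ^ (a - b) * D ^ b := by rw [← ENNReal.rpow_add _ _ hD₀ hDtop, sub_add_cancel]
    _ ≤ ENNReal.ofReal (Real.exp C) * D ^ b := by
      gcongr
      rw [← ENNReal.ofReal_toReal hDtop, ENNReal.ofReal_rpow_of_pos hd₀,
        Real.rpow_def_of_pos hd₀, mul_comm]
      exact ENNReal.ofReal_le_ofReal (Real.exp_le_exp.2 hexp)

namespace MeasureTheory

variable {X : Type*} [MetricSpace X]

theorem OuterMeasure.mkMetric'_le_smul {m₁ m₂ : Set X → ℝ≥0∞} {c ε : ℝ≥0∞}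
    (hc₀ : c ≠ 0) (hc : c ≠ ∞) (hε : 0 < ε)
    (h : ∀ s : Set X, s.Nonempty → ediam s ≤ ε → m₁ s ≤ c * m₂ s) :
    mkMetric' m₁ ≤ c • mkMetric' m₂ := by
  intro s
  refine le_of_tendsto_of_tendsto (mkMetric'.tendsto_pre _ s)
    (ENNReal.Tendsto.const_mul (mkMetric'.tendsto_pre _ s) (Or.inr hc)) ?_
  filter_upwards [Ioo_mem_nhdsGT hε] with r hr
  rw [← smul_eq_mul, ← smul_apply, mkMetric'.pre, mkMetric'.pre, smul_boundedBy hc]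
  refine le_boundedBy'.2 (fun t ht => (boundedBy_le t).trans ?_) s
  simp only [Pi.smul_apply, smul_eq_mul, extend, iInf_eq_if]
  split_ifs with htr
  · exact h t ht (htr.trans hr.2.le)
  · simp [ENNReal.mul_top hc₀]

theorem Measure.mkMetric'_le_smul [MeasurableSpace X] [BorelSpace X]
    {m₁ m₂ : Set X → ℝ≥0∞} {c ε : ℝ≥0∞} (hc₀ : c ≠ 0) (hc : c ≠ ∞) (hε : 0 < ε)
    (h : ∀ s : Set X, s.Nonempty → ediam s ≤ ε → m₁ s ≤ c * m₂ s) :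
    Measure.mkMetric' m₁ ≤ c • Measure.mkMetric' m₂ :=
  Measure.le_iff.2 fun s hs => by
    simpa only [Measure.mkMetric', Measure.smul_apply, _root_.smul_apply, smul_eq_mul,
      toMeasure_apply _ _ hs] using OuterMeasure.mkMetric'_le_smul hc₀ hc hε h s

end MeasureTheory

theorem StrongEquiv.of_le_smul {X : Type*} [MeasurableSpace X] {μ ν : Measure X} {c : ℝ≥0∞}
    (hc₀ : c ≠ 0) (hc : c ≠ ∞) (hμν : μ ≤ c • ν) (hνμ : ν ≤ c • μ) : StrongEquiv μ ν := by
  refine ⟨c, pos_iff_ne_zero.2 hc₀, hc, fun E _ => ⟨?_, hμν E⟩⟩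
  rw [ENNReal.div_le_iff_le_mul (Or.inl hc₀) (Or.inl hc), mul_comm]
  exact hνμ E

section LogHolder

variable {X : Type*} [MetricSpace X]

def LogHolderWith (C : ℝ) (Q : X → ℝ) : Prop :=
  ∀ x y : X, 0 < dist x y → dist x y < 1 / 2 → |Q x - Q y| ≤ C / (-Real.log (dist x y))

/-- `lambdaExp σ` is `Measure.mkMetric' (ballGauge σ)` by definition. -/
noncomputable def ballGauge (σ : X → ℝ → ℝ) (U : Set X) : ℝ≥0∞ :=
  ⨅ (x : X) (ρ : ℝ) (_ : U = ball x ρ), ediam U ^ σ x ρ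

namespace LogHolderWith

variable {Q : X → ℝ} {C : ℝ}

theorem dist_le (hQ : LogHolderWith C Q) (hC : 0 ≤ C) {s : Set X} (hs : ediam s < 1 / 2)
    {a b : X} (ha : a ∈ s) (hb : b ∈ s) :
    dist (Q a) (Q b) ≤ C / -Real.log (ediam s).toReal := by
  have hsd : (ediam s).toReal < 1 / 2 := ENNReal.toReal_lt_of_lt_ofReal (by simpa using hs)
  have hab : dist a b ≤ (ediam s).toReal := dist_le_diam_of_mem' hs.ne_top ha hb
  rcases (dist_nonneg : 0 ≤ dist a b).eq_or_lt with hab₀ | hab₀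
  · have hlog : 0 ≤ -Real.log (ediam s).toReal :=
      neg_nonneg.2 (Real.log_nonpos ENNReal.toReal_nonneg (by linarith))
    rw [dist_eq_zero.1 hab₀.symm, dist_self]
    positivity
  calc dist (Q a) (Q b) ≤ C / -Real.log (dist a b) := hQ a b hab₀ (by linarith)
    _ ≤ C / -Real.log (ediam s).toReal := by
      have : Real.log (ediam s).toReal < 0 := Real.log_neg (hab₀.trans_le hab) (by linarith)
      gcongr
      linarith

theorem isBounded_image (hQ : LogHolderWith C Q) (hC : 0 ≤ C) {s : Set X}
    (hs : ediam s < 1 / 2) : Bornology.IsBounded (Q '' s) :=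
  isBounded_iff.2 ⟨_, by
    rintro _ ⟨a, ha, rfl⟩ _ ⟨b, hb, rfl⟩
    exact hQ.dist_le hC hs ha hb⟩

theorem sInf_image_le_sSup_image (hQ : LogHolderWith C Q) (hC : 0 ≤ C) {s : Set X}
    (hs : ediam s < 1 / 2) : sInf (Q '' s) ≤ sSup (Q '' s) :=
  have hb := hQ.isBounded_image hC hs
  Real.sInf_le_sSup _ hb.bddBelow hb.bddAbove

theorem sSup_sub_sInf_image_le (hQ : LogHolderWith C Q) (hC : 0 ≤ C) {s : Set X}
    (hne : s.Nonempty) (hs : ediam s < 1 / 2) :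
    sSup (Q '' s) - sInf (Q '' s) ≤ C / -Real.log (ediam s).toReal := by
  rw [← Real.diam_eq (hQ.isBounded_image hC hs)]
  refine diam_le_of_forall_dist_le_of_nonempty (hne.image Q) ?_
  rintro _ ⟨a, ha, rfl⟩ _ ⟨b, hb, rfl⟩
  exact hQ.dist_le hC hs ha hb

theorem ballGauge_le (hQ : LogHolderWith C Q) (hC : 0 ≤ C) {σ₁ σ₂ : X → ℝ → ℝ}
    (h₁ : ∀ x ρ, (ball x ρ).Nonempty → ediam (ball x ρ) < 1 / 2 → sInf (Q '' ball x ρ) ≤ σ₁ x ρ)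
    (h₂ : ∀ x ρ, (ball x ρ).Nonempty → ediam (ball x ρ) < 1 / 2 → σ₂ x ρ ≤ sSup (Q '' ball x ρ))
    {s : Set X} (hne : s.Nonempty) (hs : ediam s < 1 / 2) :
    ballGauge σ₁ s ≤ ENNReal.ofReal (Real.exp C) * ballGauge σ₂ s := by
  have hK : ENNReal.ofReal (Real.exp C) ≠ 0 := (ENNReal.ofReal_pos.2 (Real.exp_pos C)).ne'
  simp only [ballGauge, ENNReal.mul_iInf_of_ne hK ENNReal.ofReal_ne_top]
  refine iInf_mono fun x => iInf_mono fun ρ => iInf_mono fun hball => ?_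
  subst hball
  refine ENNReal.rpow_le_exp_mul_rpow (hs.trans (by norm_num)) hC ?_
  linarith [h₁ x ρ hne hs, h₂ x ρ hne hs, hQ.sSup_sub_sInf_image_le hC hne hs]

variable [MeasurableSpace X] [BorelSpace X]

theorem lambdaExp_le_smul (hQ : LogHolderWith C Q) (hC : 0 ≤ C) {σ₁ σ₂ : X → ℝ → ℝ}
    (h₁ : ∀ x ρ, (ball x ρ).Nonempty → ediam (ball x ρ) < 1 / 2 → sInf (Q '' ball x ρ) ≤ σ₁ x ρ)
    (h₂ : ∀ x ρ, (ball x ρ).Nonempty → ediam (ball x ρ) < 1 / 2 → σ₂ x ρ ≤ sSup (Q '' ball x ρ)) :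
    lambdaExp σ₁ ≤ ENNReal.ofReal (Real.exp C) • (lambdaExp σ₂ : Measure X) :=
  Measure.mkMetric'_le_smul (ENNReal.ofReal_pos.2 (Real.exp_pos C)).ne' ENNReal.ofReal_ne_top
    (by norm_num : (0 : ℝ≥0∞) < 1 / 4) fun _ hne hs =>
      hQ.ballGauge_le hC h₁ h₂ hne (hs.trans_lt (by norm_num))

theorem strongEquiv_lambdaExp (hQ : LogHolderWith C Q) (hC : 0 ≤ C) {σ₁ σ₂ : X → ℝ → ℝ}
    (h₁ : ∀ x ρ, (ball x ρ).Nonempty → ediam (ball x ρ) < 1 / 2 →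
      σ₁ x ρ ∈ Set.Icc (sInf (Q '' ball x ρ)) (sSup (Q '' ball x ρ)))
    (h₂ : ∀ x ρ, (ball x ρ).Nonempty → ediam (ball x ρ) < 1 / 2 →
      σ₂ x ρ ∈ Set.Icc (sInf (Q '' ball x ρ)) (sSup (Q '' ball x ρ))) :
    StrongEquiv (lambdaExp σ₁) (lambdaExp σ₂ : Measure X) :=
  .of_le_smul (ENNReal.ofReal_pos.2 (Real.exp_pos C)).ne' ENNReal.ofReal_ne_top
    (hQ.lambdaExp_le_smul hC (fun x ρ hne hs => (h₁ x ρ hne hs).1)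
      fun x ρ hne hs => (h₂ x ρ hne hs).2)
    (hQ.lambdaExp_le_smul hC (fun x ρ hne hs => (h₂ x ρ hne hs).1)
      fun x ρ hne hs => (h₁ x ρ hne hs).2)

end LogHolderWith

end LogHolder

theorem statement8_general {X : Type*} [MetricSpace X]
    [MeasurableSpace X] [BorelSpace X]
    (Q : X → ℝ) (hQ : LogHolder Q)
    (Qt : X → ℝ → ℝ)
    (hQt : ∀ (x : X) (ρ : ℝ), (Metric.ball x ρ).Nonempty →
      sInf (Q '' Metric.ball x ρ) ≤ Qt x ρ ∧ Qt x ρ ≤ sSup (Q '' Metric.ball x ρ)) :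
    StrongEquiv (lambdaExp (fun x ρ => sSup (Q '' Metric.ball x ρ)))
        (lambdaExp (fun x ρ => sInf (Q '' Metric.ball x ρ)) : Measure X) ∧
    StrongEquiv (lambdaExp (fun x ρ => sSup (Q '' Metric.ball x ρ))) (lambdaExp Qt : Measure X) ∧
    StrongEquiv (lambdaExp (fun x ρ => sInf (Q '' Metric.ball x ρ))) (lambdaExp Qt : Measure X) := by
  obtain ⟨C, hC, hQC⟩ : ∃ C, 0 < C ∧ LogHolderWith C Q := hQ
  have hSup : ∀ x ρ, (ball x ρ).Nonempty → ediam (ball x ρ) < 1 / 2 →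
      sSup (Q '' ball x ρ) ∈ Set.Icc (sInf (Q '' ball x ρ)) (sSup (Q '' ball x ρ)) :=
    fun _ _ _ hs => ⟨hQC.sInf_image_le_sSup_image hC.le hs, le_rfl⟩
  have hInf : ∀ x ρ, (ball x ρ).Nonempty → ediam (ball x ρ) < 1 / 2 →
      sInf (Q '' ball x ρ) ∈ Set.Icc (sInf (Q '' ball x ρ)) (sSup (Q '' ball x ρ)) :=
    fun _ _ _ hs => ⟨le_rfl, hQC.sInf_image_le_sSup_image hC.le hs⟩
  have hQt_small : ∀ x ρ, (ball x ρ).Nonempty → ediam (ball x ρ) < 1 / 2 →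
      Qt x ρ ∈ Set.Icc (sInf (Q '' ball x ρ)) (sSup (Q '' ball x ρ)) :=
    fun x ρ hne _ => hQt x ρ hne
  exact ⟨hQC.strongEquiv_lambdaExp hC.le hSup hInf, hQC.strongEquiv_lambdaExp hC.le hSup hQt_small,
    hQC.strongEquiv_lambdaExp hC.le hInf hQt_small⟩

theorem statement8 {X : Type*} [MetricSpace X] [CompactSpace X]
    [MeasurableSpace X] [BorelSpace X]
    (Q : X → ℝ) (hQpos : ∀ x, 0 < Q x) (hQ : LogHolder Q)
    (Qt : X → ℝ → ℝ) (hQt0 : ∀ x ρ, 0 ≤ Qt x ρ)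
    (hQt : ∀ (x : X) (ρ : ℝ), (Metric.ball x ρ).Nonempty →
      sInf (Q '' Metric.ball x ρ) ≤ Qt x ρ ∧ Qt x ρ ≤ sSup (Q '' Metric.ball x ρ)) :
    StrongEquiv (lambdaExp (fun x ρ => sSup (Q '' Metric.ball x ρ)))
        (lambdaExp (fun x ρ => sInf (Q '' Metric.ball x ρ)) : Measure X) ∧
    StrongEquiv (lambdaExp (fun x ρ => sSup (Q '' Metric.ball x ρ))) (lambdaExp Qt : Measure X) ∧
    StrongEquiv (lambdaExp (fun x ρ => sInf (Q '' Metric.ball x ρ))) (lambdaExp Qt : Measure X) :=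
  statement8_general Q hQ Qt hQt
end

section
/- If ν is an Ahlfors Q-regular Borel measure on a metric space X (with Q : X → (0,∞) bounded), then Q is log-Hölder continuous. -/
/- STATEMENT 9: If ν is an Ahlfors Q-regular Borel measure on a metric space X
   (with Q : X → (0,∞) bounded), then Q is log-Hölder continuous. -/

open MeasureTheory Metric
open scoped ENNReal

/-- `ν` is (variable) Ahlfors `Q`-regular: there is `C > 1` with
`ν(B_r(x))/C ≤ r^{Q(x)} ≤ C·ν(B_r(x))` for all `x` and all `0 < r ≤ diam X`. -/
def AhlforsQRegular {X : Type*} [MetricSpace X] [MeasurableSpace X]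
    (ν : Measure X) (Q : X → ℝ) : Prop :=
  ∃ C : ℝ≥0∞, 1 < C ∧ C ≠ ⊤ ∧
    ∀ (x : X) (r : ℝ), 0 < r → ENNReal.ofReal r ≤ EMetric.diam (Set.univ : Set X) →
      ν (Metric.ball x r) / C ≤ ENNReal.ofReal (r ^ Q x) ∧
        ENNReal.ofReal (r ^ Q x) ≤ C * ν (Metric.ball x r)

theorem statement9 {X : Type*} [MetricSpace X] [MeasurableSpace X] [BorelSpace X]
    (ν : Measure X) (Q : X → ℝ) (hQpos : ∀ x, 0 < Q x) (hQbd : ∃ M : ℝ, ∀ x, Q x ≤ M)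
    (hreg : AhlforsQRegular ν Q) : LogHolder Q := by
  obtain ⟨C, hC1, hCt, hreg⟩ := hreg
  obtain ⟨M, hM⟩ := hQbd
  set c : ℝ := C.toReal with hc
  have hc1 : 1 < c := by
    have := (ENNReal.toReal_lt_toReal (by norm_num) hCt).mpr hC1
    simpa using this
  have hCne0 : C ≠ 0 := by
    intro h; rw [h] at hC1; exact absurd hC1 (by simp)
  have hCof : C = ENNReal.ofReal c := (ENNReal.ofReal_toReal hCt).symm
  set M' : ℝ := max M 1 with hM'def
  have hM'1 : (1 : ℝ) ≤ M' := le_max_right _ _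
  have hM' : ∀ x, Q x ≤ M' := fun x => le_trans (hM x) (le_max_left _ _)
  set t : ℝ := (EMetric.diam (Set.univ : Set X)).toReal with ht
  set C₀ : ℝ := (2 * Real.log c + M' * Real.log 2) + max 0 (M' * (1 - Real.log (t / 2)))
    with hC₀
  have hlogc : 0 < Real.log c := Real.log_pos hc1
  have hlog2 : 0 < Real.log 2 := Real.log_pos (by norm_num)
  have hC₁pos : 0 < 2 * Real.log c + M' * Real.log 2 := by nlinarith
  have hC₀pos : 0 < C₀ := by
    have := le_max_left (0 : ℝ) (M' * (1 - Real.log (t / 2)))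
    rw [hC₀]; linarith
  have key : ∀ x y : X, 0 < dist x y → dist x y < 1 / 2 →
      Q y - Q x ≤ C₀ / (-Real.log (dist x y)) := by
    intro x y hd hd2
    set d : ℝ := dist x y with hdd
    have hL : 0 < -Real.log d := by
      have : Real.log d < 0 := Real.log_neg hd (by linarith)
      linarith
    rw [le_div_iff₀ hL]
    by_cases hcase : ENNReal.ofReal (2 * d) ≤ EMetric.diam (Set.univ : Set X)
    · -- main case: radius 2d is admissible
      have hdiam : ENNReal.ofReal d ≤ EMetric.diam (Set.univ : Set X) :=
        le_trans (ENNReal.ofReal_le_ofReal (by linarith)) hcase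
      have h2d : (0 : ℝ) < 2 * d := by linarith
      have h1 : ENNReal.ofReal (d ^ Q x) ≤ C * ν (ball x d) := (hreg x d hd hdiam).2
      have h2 : ν (ball y (2 * d)) / C ≤ ENNReal.ofReal ((2 * d) ^ Q y) :=
        (hreg y (2 * d) h2d hcase).1
      have h3 : ν (ball x d) ≤ ν (ball y (2 * d)) :=
        measure_mono (ball_subset_ball' (by rw [← hdd]; linarith))
      have h2' : ν (ball y (2 * d)) ≤ ENNReal.ofReal ((2 * d) ^ Q y) * C :=
        (ENNReal.div_le_iff hCne0 hCt).mp h2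
      have h4 : ENNReal.ofReal (d ^ Q x) ≤ ENNReal.ofReal (c * ((2 * d) ^ Q y * c)) := by
        calc ENNReal.ofReal (d ^ Q x) ≤ C * ν (ball x d) := h1
          _ ≤ C * (ENNReal.ofReal ((2 * d) ^ Q y) * C) :=
              mul_le_mul_right (le_trans h3 h2') C
          _ = ENNReal.ofReal (c * ((2 * d) ^ Q y * c)) := by
              rw [hCof, ← ENNReal.ofReal_mul (by positivity), ← ENNReal.ofReal_mul (by positivity)]
      have hreal : d ^ Q x ≤ c * ((2 * d) ^ Q y * c) :=
        (ENNReal.ofReal_le_ofReal_iff (by positivity)).mp h4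
      have hlhs : (0 : ℝ) < d ^ Q x := Real.rpow_pos_of_pos hd _
      have hlog := Real.log_le_log hlhs hreal
      rw [Real.log_rpow hd, Real.log_mul (by positivity) (by positivity),
        Real.log_mul (by positivity) (by positivity), Real.log_rpow h2d,
        Real.log_mul (by norm_num) (ne_of_gt hd)] at hlog
      -- hlog : Q x * log d ≤ log c + (Q y * (log 2 + log d) + log c)
      have hy2 : Q y * Real.log 2 ≤ M' * Real.log 2 :=
        mul_le_mul_of_nonneg_right (hM' y) hlog2.le
      have hmax := le_max_left (0 : ℝ) (M' * (1 - Real.log (t / 2)))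
      have hexp : (Q y - Q x) * -Real.log d
          = Q x * Real.log d - Q y * Real.log d := by ring
      rw [hC₀]
      nlinarith [hlog, hy2, hmax, hexp]
    · -- degenerate case: 2d exceeds the diameter
      push_neg at hcase
      have hne : EMetric.diam (Set.univ : Set X) ≠ ⊤ := ne_top_of_lt hcase
      have ht2d : t < 2 * d := by
        have h := (ENNReal.toReal_lt_toReal hne ENNReal.ofReal_ne_top).mpr hcase
        rwa [ENNReal.toReal_ofReal (by linarith)] at h
      have hdt : d ≤ t := by
        have h0 : ENNReal.ofReal d ≤ EMetric.diam (Set.univ : Set X) := by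
          rw [hdd, ← edist_dist]
          exact EMetric.edist_le_diam_of_mem (Set.mem_univ x) (Set.mem_univ y)
        rw [← ENNReal.ofReal_toReal hne] at h0
        exact (ENNReal.ofReal_le_ofReal_iff ENNReal.toReal_nonneg).mp h0
      have hQyM : Q y - Q x ≤ M' := by
        have h1 := hQpos x
        have h2 := hM' y
        linarith
      have hlogt : Real.log (t / 2) ≤ Real.log d :=
        Real.log_le_log (by linarith) (by linarith)
      have h5 : (Q y - Q x) * -Real.log d ≤ M' * -Real.log d :=
        mul_le_mul_of_nonneg_right hQyM hL.le
      have h6 : M' * -Real.log d ≤ M' * (1 - Real.log (t / 2)) :=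
        mul_le_mul_of_nonneg_left (by linarith) (by linarith)
      have h7 := le_max_right (0 : ℝ) (M' * (1 - Real.log (t / 2)))
      rw [hC₀]
      linarith
  refine ⟨C₀, hC₀pos, fun x y hd hd2 => ?_⟩
  rw [abs_sub_le_iff]
  constructor
  · have := key y x (by rwa [dist_comm]) (by rwa [dist_comm])
    rwa [dist_comm y x] at this
  · exact key x y hd hd2
end

section
/- The local time exponent β : X → [0,∞] is upper semicontinuous (for every c the set {x : β(x) < c} is open), and β(x) ≥ 1 for every x ∈ X. -/
/- STATEMENT 14: In the setting of r-step random walks on a compact connected metric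
   measure space (X,d,μ) with more than one point and μ of full support, the local time
   exponent β(x) := inf_{R>0} β(B_R[x]) is upper semicontinuous (i.e. {x : β(x) < c} is
   open for every c) and β(x) ≥ 1 for every x. -/

open MeasureTheory Metric ProbabilityTheory Filter Topology
open scoped ENNReal

/-- Exit time from `B` of a discrete path: `τ_B(ω) = inf { k : ω k ∉ B }` (∞ if none). -/
noncomputable def exitTime {X : Type*} (B : Set X) (ω : ℕ → X) : ℝ≥0∞ :=
  ⨅ (k : ℕ) (_ : ω k ∉ B), (k : ℝ≥0∞)

/-- `E_B(x) = 𝔼^x τ_B` for the walk with trajectory kernel `κ`. -/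
noncomputable def meanExit {X : Type*} [MeasurableSpace X]
    (κ : Kernel X (ℕ → X)) (B : Set X) (x : X) : ℝ≥0∞ :=
  ∫⁻ ω, exitTime B ω ∂(κ x)

/-- `E⁺_B = sup_{y ∈ B} E_B(y)`. -/
noncomputable def maxExit {X : Type*} [MeasurableSpace X]
    (κ : Kernel X (ℕ → X)) (B : Set X) : ℝ≥0∞ :=
  ⨆ y ∈ B, meanExit κ B y

/-- `T_γ(B) = limsup_{r→0⁺} E⁺_{r,B} · r^γ`. -/
noncomputable def Texp {X : Type*} [MeasurableSpace X]
    (P : ℝ → Kernel X (ℕ → X)) (B : Set X) (γ : ℝ) : ℝ≥0∞ :=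
  Filter.limsup (fun r : ℝ => maxExit (P r) B * ENNReal.ofReal (r ^ γ)) (𝓝[>] (0 : ℝ))

/-- `β(B) = sup{ γ ≥ 0 : T_γ(B) = ∞ }` (an element of `[0,∞]`). -/
noncomputable def betaBall {X : Type*} [MeasurableSpace X]
    (P : ℝ → Kernel X (ℕ → X)) (B : Set X) : ℝ≥0∞ :=
  ⨆ (γ : ℝ) (_ : 0 ≤ γ) (_ : Texp P B γ = ⊤), ENNReal.ofReal γ

/-- The local time exponent `β(x) = inf_{R > 0} β(B_R[x])`. -/
noncomputable def localBeta {X : Type*} [MetricSpace X] [MeasurableSpace X]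
    (P : ℝ → Kernel X (ℕ → X)) (x : X) : ℝ≥0∞ :=
  ⨅ (R : ℝ) (_ : 0 < R), betaBall P (Metric.closedBall x R)

/-!
Enlarging the ball can only delay the exit, so `β(B)` is monotone in `B`; since
`B_{R/2}[y] ⊆ B_R[x]` whenever `d(x, y) < R/2`, a bound `β(B_R[x]) < c` at `x` propagates to all
nearby points, which is upper semicontinuity. For the lower bound, every step of the `r`-walk has
length `< r`, so after `k` steps the walk is within `k r` of its start and needs more than `R / r`
steps to leave `B_R[x]`. Hence `E⁺_{r,B} · r^γ ≥ R r^{γ-1} → ∞` for every `γ < 1`.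
-/

section Monotonicity

variable {X : Type*}

lemma exitTime_mono {B B' : Set X} (h : B ⊆ B') (ω : ℕ → X) :
    exitTime B ω ≤ exitTime B' ω :=
  le_iInf₂ fun k hk => iInf₂_le k fun hB => hk (h hB)

lemma le_exitTime {B : Set X} {ω : ℕ → X} {m : ℕ} (h : ∀ k < m, ω k ∈ B) :
    (m : ℝ≥0∞) ≤ exitTime B ω :=
  le_iInf₂ fun k hk => Nat.cast_le.2 (not_lt.1 fun hkm => hk (h k hkm))

variable [MeasurableSpace X] {B B' : Set X}

lemma meanExit_mono (κ : Kernel X (ℕ → X)) (h : B ⊆ B') (x : X) :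
    meanExit κ B x ≤ meanExit κ B' x :=
  lintegral_mono fun ω => exitTime_mono h ω

lemma maxExit_mono (κ : Kernel X (ℕ → X)) (h : B ⊆ B') : maxExit κ B ≤ maxExit κ B' :=
  iSup₂_le fun y hy => le_iSup₂_of_le y (h hy) (meanExit_mono κ h y)

lemma Texp_mono (P : ℝ → Kernel X (ℕ → X)) (h : B ⊆ B') (γ : ℝ) :
    Texp P B γ ≤ Texp P B' γ :=
  limsup_le_limsup (Eventually.of_forall fun r => mul_le_mul_left (maxExit_mono (P r) h) _)

lemma betaBall_mono (P : ℝ → Kernel X (ℕ → X)) (h : B ⊆ B') : betaBall P B ≤ betaBall P B' :=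
  iSup₂_le fun γ hγ => iSup_le fun hT =>
    le_iSup₂_of_le γ hγ (le_iSup_of_le (top_le_iff.1 (hT ▸ Texp_mono P h γ)) le_rfl)

end Monotonicity

theorem isOpen_setOf_localBeta_lt {X : Type*} [MetricSpace X] [MeasurableSpace X]
    (P : ℝ → Kernel X (ℕ → X)) (c : ℝ≥0∞) : IsOpen {x : X | localBeta P x < c} := by
  refine Metric.isOpen_iff.2 fun x hx => ?_
  obtain ⟨R, hR, hRc⟩ : ∃ R > 0, betaBall P (closedBall x R) < c := by
    simpa only [Set.mem_ofPred_eq, localBeta, iInf_lt_iff, exists_prop] using hx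
  refine ⟨R / 2, half_pos hR, fun y hy => ?_⟩
  have hsub : closedBall y (R / 2) ⊆ closedBall x R :=
    closedBall_subset_closedBall' (by linarith [mem_ball.1 hy])
  calc localBeta P y ≤ betaBall P (closedBall y (R / 2)) := iInf₂_le _ (half_pos hR)
    _ ≤ betaBall P (closedBall x R) := betaBall_mono P hsub
    _ < c := hRc

theorem Texp_eq_top_of_ofReal_div_le {X : Type*} [MeasurableSpace X]
    {P : ℝ → Kernel X (ℕ → X)} {B : Set X} {R : ℝ} (hR : 0 < R)
    (h : ∀ r > 0, ENNReal.ofReal (R / r) ≤ maxExit (P r) B) {γ : ℝ} (hγ : γ < 1) :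
    Texp P B γ = ⊤ := by
  have hlim : Tendsto (fun r : ℝ => ENNReal.ofReal (R * r ^ (γ - 1))) (𝓝[>] 0) (𝓝 ⊤) :=
    ENNReal.tendsto_ofReal_atTop.comp
      ((tendsto_rpow_neg_nhdsGT_zero (by linarith)).const_mul_atTop hR)
  have hle : ∀ᶠ r in 𝓝[>] (0 : ℝ),
      ENNReal.ofReal (R * r ^ (γ - 1)) ≤ maxExit (P r) B * ENNReal.ofReal (r ^ γ) := by
    filter_upwards [self_mem_nhdsWithin] with r (hr : 0 < r)
    calc ENNReal.ofReal (R * r ^ (γ - 1)) = ENNReal.ofReal (R / r) * ENNReal.ofReal (r ^ γ) := by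
          rw [← ENNReal.ofReal_mul (by positivity), Real.rpow_sub_one hr.ne']
          ring_nf
      _ ≤ maxExit (P r) B * ENNReal.ofReal (r ^ γ) := mul_le_mul_left (h r hr) _
  exact top_le_iff.1 (hlim.limsup_eq ▸ limsup_le_limsup hle)

theorem one_le_betaBall_of_Texp_eq_top {X : Type*} [MeasurableSpace X]
    {P : ℝ → Kernel X (ℕ → X)} {B : Set X} (h : ∀ γ : ℝ, 0 ≤ γ → γ < 1 → Texp P B γ = ⊤) :
    1 ≤ betaBall P B := by
  refine le_of_forall_lt fun c hc => ?_
  obtain ⟨γ, hγ, hcγ, hγ1⟩ := ENNReal.lt_iff_exists_real_btwn.1 hc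
  exact hcγ.trans_le <|
    le_iSup₂_of_le γ hγ (le_iSup_of_le (h γ hγ (ENNReal.ofReal_lt_one.1 hγ1)) le_rfl)

section RandomWalk

variable {X : Type*} [MetricSpace X] [MeasurableSpace X] {κ : Kernel X (ℕ → X)}
  [IsMarkovKernel κ] [OpensMeasurableSpace X] {μ : Measure X} {r : ℝ}

/-- `hshift` is the Markov property of the `r`-step walk at its first step. -/
lemma ae_shift_mem_of_forall_ball {x : X} {S : Set (ℕ → X)} (hS : MeasurableSet S)
    (hshift : ∀ S : Set (ℕ → X), MeasurableSet S →
      κ x ((fun (ω : ℕ → X) (n : ℕ) => ω (n + 1)) ⁻¹' S) =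
        (μ (ball x r))⁻¹ * ∫⁻ y in ball x r, κ y S ∂μ)
    (h : ∀ y ∈ ball x r, ∀ᵐ ω ∂κ y, ω ∈ S) :
    ∀ᵐ ω ∂κ x, (fun n => ω (n + 1)) ∈ S := by
  have hpre : MeasurableSet ((fun (ω : ℕ → X) (n : ℕ) => ω (n + 1)) ⁻¹' S) :=
    hS.preimage (measurable_pi_lambda _ fun n => measurable_pi_apply (n + 1))
  refine (ae_iff_measure_eq hpre.nullMeasurableSet).2 ?_
  have hint : ∫⁻ y in ball x r, κ y S ∂μ = ∫⁻ y in ball x r, κ y Set.univ ∂μ :=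
    setLIntegral_congr_fun measurableSet_ball fun y hy =>
      (ae_iff_measure_eq hS.nullMeasurableSet).1 (h y hy)
  rw [show {ω : ℕ → X | (fun n => ω (n + 1)) ∈ S} = _ ⁻¹' S from rfl, hshift S hS, hint,
    ← hshift Set.univ MeasurableSet.univ, Set.preimage_univ]

lemma ae_forall_dist_le
    (hstart : ∀ x : X, κ x {ω | ω 0 = x} = 1)
    (hshift : ∀ (x : X) (S : Set (ℕ → X)), MeasurableSet S →
      κ x ((fun (ω : ℕ → X) (n : ℕ) => ω (n + 1)) ⁻¹' S) =
        (μ (ball x r))⁻¹ * ∫⁻ y in ball x r, κ y S ∂μ)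
    (n : ℕ) (x : X) : ∀ᵐ ω ∂κ x, ∀ k ≤ n, dist (ω k) x ≤ k * r := by
  have hstart_ae : ∀ x : X, ∀ᵐ ω ∂κ x, ω 0 = x := fun x =>
    have h0 : MeasurableSet {ω : ℕ → X | ω 0 = x} :=
      (measurableSet_singleton x).preimage (measurable_pi_apply 0)
    (ae_iff_measure_eq h0.nullMeasurableSet).2 (by rw [hstart x, measure_univ])
  induction n generalizing x with
  | zero =>
    filter_upwards [hstart_ae x] with ω hω k hk
    simp [Nat.le_zero.1 hk, hω]
  | succ n ih =>
    set S : Set (ℕ → X) := {ω | ∀ k ≤ n, dist (ω k) x ≤ (k + 1) * r}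
    have hS : MeasurableSet S := by
      simp only [S, Set.ofPred_forall]
      exact MeasurableSet.iInter fun k => MeasurableSet.iInter fun _ =>
        measurableSet_closedBall.preimage (measurable_pi_apply k)
    have hstep : ∀ y ∈ ball x r, ∀ᵐ ω ∂κ y, ω ∈ S := fun y hy => by
      filter_upwards [ih y] with ω hω k hk
      linarith [hω k hk, dist_triangle (ω k) y x, mem_ball.1 hy]
    filter_upwards [hstart_ae x, ae_shift_mem_of_forall_ball hS (hshift x) hstep]
      with ω h0 hω k hk
    cases k with
    | zero => simp [h0]
    | succ k => simpa using hω k (Nat.succ_le_succ_iff.1 hk)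

lemma ofReal_div_le_meanExit
    (hstart : ∀ x : X, κ x {ω | ω 0 = x} = 1)
    (hshift : ∀ (x : X) (S : Set (ℕ → X)), MeasurableSet S →
      κ x ((fun (ω : ℕ → X) (n : ℕ) => ω (n + 1)) ⁻¹' S) =
        (μ (ball x r))⁻¹ * ∫⁻ y in ball x r, κ y S ∂μ)
    (hr : 0 < r) {R : ℝ} (hR : 0 ≤ R) (x : X) :
    ENNReal.ofReal (R / r) ≤ meanExit κ (closedBall x R) x := by
  set n := ⌊R / r⌋₊
  have hnr : (n : ℝ) * r ≤ R := (le_div_iff₀ hr).1 (Nat.floor_le (by positivity))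
  have hexit : ∀ᵐ ω ∂κ x, ((n + 1 : ℕ) : ℝ≥0∞) ≤ exitTime (closedBall x R) ω := by
    filter_upwards [ae_forall_dist_le hstart hshift n x] with ω hω
    refine le_exitTime fun k hk => mem_closedBall.2 ((hω k (Nat.lt_succ_iff.1 hk)).trans ?_)
    exact (mul_le_mul_of_nonneg_right (Nat.cast_le.2 (Nat.lt_succ_iff.1 hk)) hr.le).trans hnr
  calc ENNReal.ofReal (R / r) ≤ ((n + 1 : ℕ) : ℝ≥0∞) := by
        rw [← ENNReal.ofReal_natCast]
        exact ENNReal.ofReal_le_ofReal (by push_cast; exact (Nat.lt_floor_add_one _).le)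
    _ = ∫⁻ _, ((n + 1 : ℕ) : ℝ≥0∞) ∂κ x := by simp
    _ ≤ meanExit κ (closedBall x R) x := lintegral_mono_ae hexit

end RandomWalk

theorem statement14_general {X : Type*} [MetricSpace X] [MeasurableSpace X] [BorelSpace X]
    (μ : Measure X)
    (P : ℝ → Kernel X (ℕ → X)) (hmk : ∀ r : ℝ, IsMarkovKernel (P r))
    (hstart : ∀ (r : ℝ), 0 < r → ∀ x : X, P r x {ω | ω 0 = x} = 1)
    (hshift : ∀ (r : ℝ), 0 < r → ∀ (x : X) (S : Set (ℕ → X)), MeasurableSet S →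
      P r x ((fun (ω : ℕ → X) (n : ℕ) => ω (n + 1)) ⁻¹' S) =
        (μ (Metric.ball x r))⁻¹ * ∫⁻ y in Metric.ball x r, P r y S ∂μ) :
    (∀ c : ℝ≥0∞, IsOpen {x : X | localBeta P x < c}) ∧
    (∀ x : X, 1 ≤ localBeta P x) := by
  refine ⟨isOpen_setOf_localBeta_lt P, fun x => le_iInf₂ fun R hR => ?_⟩
  have hmaxExit : ∀ r > 0, ENNReal.ofReal (R / r) ≤ maxExit (P r) (closedBall x R) :=
    fun r hr => (ofReal_div_le_meanExit (κ := P r) (hstart r hr) (hshift r hr) hr hR.le x).trans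
      (le_iSup₂ (f := fun y _ => meanExit (P r) (closedBall x R) y) x (mem_closedBall_self hR.le))
  exact one_le_betaBall_of_Texp_eq_top fun γ _ hγ => Texp_eq_top_of_ofReal_div_le hR hmaxExit hγ

theorem statement14 {X : Type*} [MetricSpace X] [CompactSpace X] [ConnectedSpace X]
    [Nontrivial X] [MeasurableSpace X] [BorelSpace X]
    (μ : Measure X) [μ.IsOpenPosMeasure] [IsFiniteMeasure μ]
    (P : ℝ → Kernel X (ℕ → X)) (hmk : ∀ r : ℝ, IsMarkovKernel (P r))
    (hstart : ∀ (r : ℝ), 0 < r → ∀ x : X, P r x {ω | ω 0 = x} = 1)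
    (hshift : ∀ (r : ℝ), 0 < r → ∀ (x : X) (S : Set (ℕ → X)), MeasurableSet S →
      P r x ((fun (ω : ℕ → X) (n : ℕ) => ω (n + 1)) ⁻¹' S) =
        (μ (Metric.ball x r))⁻¹ * ∫⁻ y in Metric.ball x r, P r y S ∂μ) :
    (∀ c : ℝ≥0∞, IsOpen {x : X | localBeta P x < c}) ∧
    (∀ x : X, 1 ≤ localBeta P x) :=
  statement14_general μ P hmk hstart hshift
end

section
/- There exists a constant c < 1 such that ‖P^B_r f‖_{L²(μ_r)} ≤ c·‖f‖_{L²(μ_r)} for every f ∈ L²(X, μ_r); that is, the operator norm of P^B_r on L²(X, μ_r) is strictly less than 1. -/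
/-!
The killed operator is `P f(x) = w(x)⁻¹ ∫ K(x, y) f(y) dμ(y)` with the symmetric kernel
`K(x, y) = 1_B(x) 1_B(y) 1_{d(x, y) < r}` and `w(x) = μ(B_r(x))`, the density of `μ_r`. By the
Schur test (Cauchy–Schwarz against a weight `h`, then Tonelli and the symmetry of `K`) it suffices
to find a positive bounded `h` with `∫ K(x, y) h(y) dμ(y) ≤ κ h(x) w(x)` for some `κ < 1`.

Pick a ball `B_ρ(z)` outside `B` with `ρ ≤ r/4`, and let `n(x)` be the least `k` such that `x` is
within `ρ` of a point reached from `z` by `k` hops of length `< r/2`. By connectedness and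
compactness `n ≤ N` for some `N`. For `x ∈ B` we have `n(x) ≥ 1`, and `B_r(x)` contains a ball
`B_ρ(c)`, of measure at least some `α > 0`, on which `n < n(x)`. Hence `h = 1 - lⁿ/2` satisfies
`∫_{B_r(x)} h ≤ w(x) - l^(n(x)-1) α/2`, and `l = α / (2 μ(X))` turns this into the estimate with
`κ = 1 - l^(N+1)/2`.
-/

open MeasureTheory Metric
open scoped ENNReal

/-- The killed Markov operator `P^B_r f(x) = 1_B(x)·(1/μ(B_r(x)))·∫_{B_r(x)∩B} f dμ`. -/
noncomputable def killedOp {X : Type*} [MetricSpace X] [MeasurableSpace X]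
    (μ : Measure X) (r : ℝ) (B : Set X) (f : X → ℝ) : X → ℝ :=
  B.indicator fun x => (μ (Metric.ball x r)).toReal⁻¹ * ∫ y in Metric.ball x r ∩ B, f y ∂μ

/-- The measure `μ_r` with density `x ↦ μ(B_r(x))` with respect to `μ`. -/
noncomputable def muR {X : Type*} [MetricSpace X] [MeasurableSpace X]
    (μ : Measure X) (r : ℝ) : Measure X :=
  μ.withDensity fun x => μ (Metric.ball x r)

open Set

theorem ENNReal.sq_lintegral_mul_le {α : Type*} [MeasurableSpace α] (μ : Measure α)
    {k u h : α → ℝ≥0∞} (hk : AEMeasurable k μ) (hu : AEMeasurable u μ) (hh : AEMeasurable h μ)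
    (h0 : ∀ x, h x ≠ 0) (htop : ∀ x, h x ≠ ∞) :
    (∫⁻ x, k x * u x ∂μ) ^ 2 ≤ (∫⁻ x, k x * h x ∂μ) * ∫⁻ x, k x * (u x ^ 2 / h x) ∂μ := by
  set F : α → ℝ≥0∞ := fun x => (k x * h x) ^ (2⁻¹ : ℝ)
  set G : α → ℝ≥0∞ := fun x => (k x * (u x ^ 2 / h x)) ^ (2⁻¹ : ℝ)
  have hFG : ∀ x, (F * G) x = k x * u x := fun x => by
    simp only [Pi.mul_apply, F, G, ← ENNReal.mul_rpow_of_nonneg _ _ (by norm_num : (0:ℝ) ≤ 2⁻¹)]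
    rw [show k x * h x * (k x * (u x ^ 2 / h x)) = (k x * u x) ^ 2 by
      rw [← mul_div_assoc, mul_div_assoc', ENNReal.mul_div_right_comm,
        ENNReal.mul_div_cancel_right (h0 x) (htop x)]
      ring]
    exact_mod_cast ENNReal.pow_rpow_inv_natCast two_ne_zero _
  have hsq : ∀ a : ℝ≥0∞, (a ^ (2⁻¹ : ℝ)) ^ (2 : ℝ) = a := ENNReal.rpow_inv_rpow two_ne_zero
  have holder := ENNReal.lintegral_mul_le_Lp_mul_Lq μ Real.HolderConjugate.two_two
    (f := F) (g := G) ((hk.mul hh).pow_const _) ((hk.mul ((hu.pow_const 2).div hh)).pow_const _)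
  simp only [hFG, hsq, F, G] at holder
  calc (∫⁻ x, k x * u x ∂μ) ^ 2
      ≤ ((∫⁻ x, k x * h x ∂μ) ^ (1 / 2 : ℝ) * (∫⁻ x, k x * (u x ^ 2 / h x) ∂μ) ^ (1 / 2 : ℝ)) ^ 2 :=
        pow_le_pow_left₀ zero_le holder 2
    _ = _ := by
        rw [mul_pow, one_div]
        simp only [← ENNReal.rpow_natCast, Nat.cast_ofNat, hsq]

theorem lintegral_mul_lintegral_symm_kernel {α : Type*} [MeasurableSpace α] {μ : Measure α}
    [SFinite μ] {K : α → α → ℝ≥0∞} (hK : Measurable (Function.uncurry K))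
    (hKsymm : ∀ x y, K x y = K y x) {f g : α → ℝ≥0∞} (hf : Measurable f) (hg : Measurable g) :
    ∫⁻ x, f x * ∫⁻ y, K x y * g y ∂μ ∂μ = ∫⁻ y, g y * ∫⁻ x, K y x * f x ∂μ ∂μ := calc
  _ = ∫⁻ x, ∫⁻ y, f x * (K x y * g y) ∂μ ∂μ :=
      lintegral_congr fun x =>
        (lintegral_const_mul _ ((hK.comp measurable_prodMk_left).mul hg)).symm
  _ = ∫⁻ y, ∫⁻ x, g y * (K y x * f x) ∂μ ∂μ := by
      rw [lintegral_lintegral_swap ((hf.comp measurable_fst).mul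
        (hK.mul (hg.comp measurable_snd))).aemeasurable]
      refine lintegral_congr fun y => lintegral_congr fun x => ?_
      rw [hKsymm]
      ring
  _ = _ := lintegral_congr fun y => lintegral_const_mul _ ((hK.comp measurable_prodMk_left).mul hf)

theorem lintegral_schur_test {α : Type*} [MeasurableSpace α] {μ : Measure α} [SFinite μ]
    {K : α → α → ℝ≥0∞} (hK : Measurable (Function.uncurry K)) (hKsymm : ∀ x y, K x y = K y x)
    {h w : α → ℝ≥0∞} (hh : Measurable h) (h0 : ∀ x, h x ≠ 0) (htop : ∀ x, h x ≠ ∞)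
    (hw : Measurable w) (hw0 : ∀ x, w x ≠ 0) (hwtop : ∀ x, w x ≠ ∞) {κ : ℝ≥0∞}
    (hKh : ∀ x, ∫⁻ y, K x y * h y ∂μ ≤ κ * (h x * w x)) {u : α → ℝ≥0∞} (hu : Measurable u) :
    ∫⁻ x, w x * ((w x)⁻¹ * ∫⁻ y, K x y * u y ∂μ) ^ 2 ∂μ ≤ κ ^ 2 * ∫⁻ x, w x * u x ^ 2 ∂μ := by
  set v : α → ℝ≥0∞ := fun y => u y ^ 2 / h y
  have hv : Measurable v := (hu.pow_const 2).div hh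
  have hKx : ∀ x, Measurable (K x) := fun x => hK.comp measurable_prodMk_left
  have pointwise : ∀ x, w x * ((w x)⁻¹ * ∫⁻ y, K x y * u y ∂μ) ^ 2
      ≤ κ * (h x * ∫⁻ y, K x y * v y ∂μ) := fun x => calc
    _ = (w x)⁻¹ * (∫⁻ y, K x y * u y ∂μ) ^ 2 := by
        rw [mul_pow, ← mul_assoc, sq, ← mul_assoc, ENNReal.mul_inv_cancel (hw0 x) (hwtop x),
          one_mul]
    _ ≤ (w x)⁻¹ * ((κ * (h x * w x)) * ∫⁻ y, K x y * v y ∂μ) := by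
        gcongr
        exact (ENNReal.sq_lintegral_mul_le μ (hKx x).aemeasurable hu.aemeasurable
          hh.aemeasurable h0 htop).trans (by gcongr; exact hKh x)
    _ = κ * (h x * ∫⁻ y, K x y * v y ∂μ) := by
        rw [show (w x)⁻¹ * (κ * (h x * w x) * ∫⁻ y, K x y * v y ∂μ)
          = (w x)⁻¹ * w x * (κ * (h x * ∫⁻ y, K x y * v y ∂μ)) by ring,
          ENNReal.inv_mul_cancel (hw0 x) (hwtop x), one_mul]
  have hF : Measurable fun x => h x * ∫⁻ y, K x y * v y ∂μ :=
    hh.mul (hK.mul (hv.comp measurable_snd)).lintegral_prod_right'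
  calc ∫⁻ x, w x * ((w x)⁻¹ * ∫⁻ y, K x y * u y ∂μ) ^ 2 ∂μ
      ≤ ∫⁻ x, κ * (h x * ∫⁻ y, K x y * v y ∂μ) ∂μ := lintegral_mono pointwise
    _ = κ * ∫⁻ y, v y * ∫⁻ x, K y x * h x ∂μ ∂μ := by
        rw [lintegral_const_mul _ hF, lintegral_mul_lintegral_symm_kernel hK hKsymm hh hv]
    _ ≤ κ * ∫⁻ y, v y * (κ * (h y * w y)) ∂μ := by gcongr with y; exact hKh y
    _ = κ * ∫⁻ y, κ * (w y * u y ^ 2) ∂μ := by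
        refine congrArg _ (lintegral_congr fun y => ?_)
        rw [show v y * (κ * (h y * w y)) = κ * (w y * (v y * h y)) by ring,
          ENNReal.div_mul_cancel (h0 y) (htop y)]
    _ = κ ^ 2 * ∫⁻ x, w x * u x ^ 2 ∂μ := by
        rw [lintegral_const_mul κ (by fun_prop), ← mul_assoc, sq]

section Hops
variable {X : Type*} [MetricSpace X]

theorem iUnion_iterate_thickening_eq_univ [ConnectedSpace X] {δ : ℝ} (hδ : 0 < δ) {s : Set X}
    (hs : s.Nonempty) : ⋃ k, (thickening δ)^[k + 1] s = univ := by
  set U := ⋃ k, (thickening δ)^[k + 1] s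
  have hU : IsOpen U := isOpen_iUnion fun k => by
    rw [Function.iterate_succ_apply']
    exact isOpen_thickening
  have hUc : IsClosed U := by
    refine closure_subset_iff_isClosed.1 ((closure_subset_thickening hδ U).trans ?_)
    rw [thickening_iUnion]
    exact iUnion_mono' fun k => ⟨k + 1, (Function.iterate_succ_apply' _ (k + 1) s).ge⟩
  obtain ⟨x, hx⟩ := hs
  exact IsClopen.eq_univ ⟨hUc, hU⟩ ⟨x, mem_iUnion.2 ⟨0, self_subset_thickening hδ s hx⟩⟩

theorem exists_iterate_thickening_eq_univ [CompactSpace X] [ConnectedSpace X] {δ : ℝ}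
    (hδ : 0 < δ) {s : Set X} (hs : s.Nonempty) : ∃ N, (thickening δ)^[N] s = univ := by
  have hmono : Monotone fun k => (thickening δ)^[k] s := monotone_nat_of_le_succ fun k => by
    rw [Function.iterate_succ_apply']
    exact self_subset_thickening hδ _
  obtain ⟨N, hN⟩ := isCompact_univ.elim_directed_cover _
    (fun k => by rw [Function.iterate_succ_apply']; exact isOpen_thickening)
    (iUnion_iterate_thickening_eq_univ hδ hs).ge
    (hmono.comp fun _ _ => Nat.succ_le_succ).directed_le
  exact ⟨N + 1, univ_subset_iff.1 hN⟩

theorem exists_ball_subset_of_mem_thickening_thickening {ρ δ : ℝ} {s : Set X} {x : X}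
    (hx : x ∈ thickening ρ (thickening δ s)) :
    ∃ c, ball c ρ ⊆ thickening ρ s ∩ ball x (ρ + δ + ρ) := by
  obtain ⟨y, hy, hxy⟩ := mem_thickening_iff.1 hx
  obtain ⟨c, hc, hyc⟩ := mem_thickening_iff.1 hy
  refine ⟨c, subset_inter (ball_subset_thickening hc ρ) (ball_subset_ball' ?_)⟩
  linarith [dist_triangle c y x, dist_comm c y, dist_comm y x]

theorem exists_hop_level [CompactSpace X] [ConnectedSpace X] [MeasurableSpace X]
    [OpensMeasurableSpace X] {r ρ : ℝ} (hρ : 0 < ρ) (hρr : ρ ≤ r / 4) (z : X) :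
    ∃ (n : X → ℕ) (N : ℕ), Measurable n ∧ (∀ x, n x ≤ N) ∧ (∀ x, n x = 0 → x ∈ ball z ρ) ∧
      ∀ x k, n x = k + 1 → ∃ c, ball c ρ ⊆ ball x r ∧ ∀ y ∈ ball c ρ, n y ≤ k := by
  classical
  set A : ℕ → Set X := fun k => thickening ρ ((thickening (r / 2))^[k] {z})
  obtain ⟨N, hN⟩ := exists_iterate_thickening_eq_univ (by linarith : 0 < r / 2)
    (singleton_nonempty z)
  have hA : ∀ x, ∃ k, x ∈ A k := fun x =>
    ⟨N, self_subset_thickening hρ _ (hN ▸ mem_univ x)⟩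
  refine ⟨fun x => Nat.find (hA x), N, measurable_find hA fun k => isOpen_thickening.measurableSet,
    fun x => Nat.find_min' _ (self_subset_thickening hρ _ (hN ▸ mem_univ x)), fun x hx => ?_,
    fun x k hx => ?_⟩
  · simpa [A, hx, thickening_singleton] using Nat.find_spec (hA x)
  · have hxA : x ∈ thickening ρ (thickening (r / 2) ((thickening (r / 2))^[k] {z})) := by
      simpa [A, hx, Function.iterate_succ_apply'] using Nat.find_spec (hA x)
    obtain ⟨c, hc⟩ := exists_ball_subset_of_mem_thickening_thickening hxA
    exact ⟨c, hc.trans (inter_subset_right.trans (ball_subset_ball (by linarith))),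
      fun y hy => Nat.find_min' _ (hc hy).1⟩

end Hops

theorem exists_pos_le_measureReal_ball {X : Type*} [MetricSpace X] [CompactSpace X] [Nonempty X]
    [MeasurableSpace X] (μ : Measure X) [μ.IsOpenPosMeasure] [IsFiniteMeasure μ] {ρ : ℝ}
    (hρ : 0 < ρ) : ∃ α > 0, ∀ x, α ≤ μ.real (ball x ρ) := by
  obtain ⟨t, -, ht, hcover⟩ := finite_cover_balls_of_compact (isCompact_univ (X := X)) (half_pos hρ)
  have hcover' : ∀ x, ∃ c ∈ t, dist x c < ρ / 2 := fun x => by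
    simpa using hcover (mem_univ x)
  obtain ⟨c, hc, hmin⟩ := Set.exists_min_image t (fun c => μ.real (ball c (ρ / 2))) ht
    (let ⟨c, hc, _⟩ := hcover' (Classical.arbitrary X); ⟨c, hc⟩)
  refine ⟨μ.real (ball c (ρ / 2)), ENNReal.toReal_pos
    (isOpen_ball.measure_ne_zero μ (nonempty_ball.2 (half_pos hρ))) (measure_ne_top _ _),
    fun x => ?_⟩
  obtain ⟨c', hc', hxc'⟩ := hcover' x
  exact (hmin c' hc').trans (measureReal_mono (ball_subset_ball' (by rw [dist_comm]; linarith)))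

section SchurWeight
variable {X : Type*}

noncomputable def schurWeight (l : ℝ) (n : X → ℕ) (x : X) : ℝ≥0∞ :=
  ENNReal.ofReal (1 - l ^ n x / 2)

theorem measurable_schurWeight [MeasurableSpace X] {l : ℝ} {n : X → ℕ} (hn : Measurable n) :
    Measurable (schurWeight l n) :=
  ENNReal.measurable_ofReal.comp ((measurable_from_nat (f := fun k => 1 - l ^ k / 2)).comp hn)

theorem schurWeight_ne_zero {l : ℝ} (hl0 : 0 ≤ l) (hl1 : l ≤ 1) {n : X → ℕ} {x : X} :
    schurWeight l n x ≠ 0 :=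
  (ENNReal.ofReal_pos.2 (by linarith [pow_le_one₀ (n := n x) hl0 hl1])).ne'

theorem setLIntegral_schurWeight_le [MeasurableSpace X] {μ : Measure X} [IsFiniteMeasure μ]
    {l : ℝ} (hl0 : 0 < l) (hl1 : l ≤ 1) {n : X → ℕ} {V S : Set X} (hS : MeasurableSet S)
    (hSV : S ⊆ V) (hlS : 2 * l * μ.real V ≤ μ.real S) {x : X} {k N : ℕ} (hx : n x = k + 1)
    (hkN : k ≤ N) (hdesc : ∀ y ∈ S, n y ≤ k) :
    ∫⁻ y in V, schurWeight l n y ∂μ ≤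
      ENNReal.ofReal (1 - l ^ (N + 1) / 2) * (schurWeight l n x * μ V) := by
  have hle_one : ∀ y, schurWeight l n y ≤ 1 := fun y =>
    ENNReal.ofReal_le_one.2 (by linarith [pow_nonneg hl0.le (n y)])
  have hle_S : ∀ y ∈ S, schurWeight l n y ≤ ENNReal.ofReal (1 - l ^ k / 2) := fun y hy =>
    ENNReal.ofReal_le_ofReal (by linarith [pow_le_pow_of_le_one hl0.le hl1 (hdesc y hy)])
  have hb : 0 ≤ l ^ k := pow_nonneg hl0.le k
  have hab : l ^ N ≤ l ^ k := pow_le_pow_of_le_one hl0.le hl1 hkN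
  have hσ : 0 ≤ μ.real S := measureReal_nonneg
  have hw : 0 ≤ μ.real V := measureReal_nonneg
  calc ∫⁻ y in V, schurWeight l n y ∂μ
      = ∫⁻ y in V \ S, schurWeight l n y ∂μ + ∫⁻ y in S, schurWeight l n y ∂μ := by
        rw [← lintegral_union hS disjoint_sdiff_left, sdiff_union_of_subset hSV]
    _ ≤ μ (V \ S) + ENNReal.ofReal (1 - l ^ k / 2) * μ S := by
        gcongr
        · exact (lintegral_mono hle_one).trans_eq (by rw [setLIntegral_const, one_mul])
        · exact (setLIntegral_mono' hS hle_S).trans_eq (setLIntegral_const _ _)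
    _ = ENNReal.ofReal (μ.real V - μ.real S + (1 - l ^ k / 2) * μ.real S) := by
        rw [← ofReal_measureReal (s := V \ S), measureReal_sdiff hSV hS,
          ← ofReal_measureReal (s := S),
          ← ENNReal.ofReal_mul (by linarith [pow_le_one₀ hl0.le hl1 (n := k)]),
          ← ENNReal.ofReal_add (by linarith [measureReal_mono (μ := μ) hSV])
            (mul_nonneg (by linarith [pow_le_one₀ hl0.le hl1 (n := k)]) hσ)]
    _ ≤ ENNReal.ofReal ((1 - l ^ (N + 1) / 2) * ((1 - l ^ (k + 1) / 2) * μ.real V)) := by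
        gcongr
        rw [pow_succ, pow_succ]
        nlinarith [mul_le_mul_of_nonneg_left hlS hb, mul_le_mul_of_nonneg_left hlS
          (pow_nonneg hl0.le N), mul_le_mul_of_nonneg_right hab hσ,
          mul_nonneg (mul_nonneg (pow_nonneg hl0.le N) hb) (mul_nonneg (sq_nonneg l) hw)]
    _ = _ := by
        rw [ENNReal.ofReal_mul (by linarith [pow_le_one₀ hl0.le hl1 (n := N + 1)]),
          ENNReal.ofReal_mul (by linarith [pow_le_one₀ hl0.le hl1 (n := k + 1)]),
          ofReal_measureReal, schurWeight, hx]

end SchurWeight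

section Kernel
variable {X : Type*} [MetricSpace X]

noncomputable def killedKernel (r : ℝ) (B : Set X) (x y : X) : ℝ≥0∞ :=
  B.indicator (fun x => (ball x r ∩ B).indicator 1 y) x

theorem killedKernel_comm (r : ℝ) (B : Set X) (x y : X) :
    killedKernel r B x y = killedKernel r B y x := by
  classical
  by_cases hx : x ∈ B <;> by_cases hy : y ∈ B <;>
    simp [killedKernel, indicator_apply, hx, hy, dist_comm]

theorem measurable_killedKernel [MeasurableSpace X] [OpensMeasurableSpace X]
    [SecondCountableTopology X] (r : ℝ) {B : Set X} (hB : MeasurableSet B) :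
    Measurable (Function.uncurry (killedKernel r B)) := by
  have : Function.uncurry (killedKernel r B) =
      {p : X × X | p.1 ∈ B ∧ dist p.2 p.1 < r ∧ p.2 ∈ B}.indicator 1 := by
    classical
    ext ⟨x, y⟩
    by_cases hx : x ∈ B <;> by_cases hy : y ∈ B <;> simp [killedKernel, indicator_apply, hx, hy]
  rw [this]
  exact measurable_const.indicator <| (measurable_fst hB).inter <|
    (measurableSet_lt (measurable_snd.dist measurable_fst) measurable_const).inter
      (measurable_snd hB)

theorem lintegral_killedKernel_mul [MeasurableSpace X] [OpensMeasurableSpace X] (μ : Measure X)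
    (r : ℝ) {B : Set X} (hB : MeasurableSet B) (F : X → ℝ≥0∞) (x : X) :
    ∫⁻ y, killedKernel r B x y * F y ∂μ =
      B.indicator (fun x => ∫⁻ y in ball x r ∩ B, F y ∂μ) x := by
  classical
  by_cases hx : x ∈ B
  · simp only [killedKernel, indicator_of_mem hx,
      ← lintegral_indicator (measurableSet_ball.inter hB)]
    exact lintegral_congr fun y => by simp [indicator_apply]
  · simp [killedKernel, hx]

end Kernel

/- `f` is arbitrary: where it is not integrable the Bochner integral is the junk value `0`, and by
second countability the sets where it is integrable are covered by countably many of them, on whose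
union `f` is a.e. strongly measurable. -/
theorem exists_measurable_enorm_setIntegral_le {X E : Type*} [TopologicalSpace X]
    [SecondCountableTopology X] [MeasurableSpace X] [OpensMeasurableSpace X]
    [NormedAddCommGroup E] [NormedSpace ℝ E] (μ : Measure X) {ι : Type*} {U : ι → Set X}
    (hU : ∀ i, IsOpen (U i)) {B : Set X} (hB : MeasurableSet B) (f : X → E) :
    ∃ u : X → ℝ≥0∞, Measurable u ∧ (∀ᵐ x ∂μ, u x ≤ ‖f x‖ₑ) ∧
      ∀ i, ‖∫ y in U i ∩ B, f y ∂μ‖ₑ ≤ ∫⁻ y in U i ∩ B, u y ∂μ := by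
  set D := {i | IntegrableOn f (U i ∩ B) μ}
  obtain ⟨T, hTD, hTc, hTU⟩ := TopologicalSpace.isOpen_biUnion_countable D U fun i _ => hU i
  set O := ⋃ i ∈ D, U i
  have hOB : MeasurableSet (O ∩ B) := (isOpen_biUnion fun i _ => hU i).measurableSet.inter hB
  have hf : AEStronglyMeasurable f (μ.restrict (O ∩ B)) := by
    have := hTc.to_subtype
    rw [← hTU, biUnion_eq_iUnion, iUnion_inter]
    exact AEStronglyMeasurable.iUnion fun i => (hTD i.2).aestronglyMeasurable
  refine ⟨(O ∩ B).indicator fun x => ‖hf.mk f x‖ₑ,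
    hf.stronglyMeasurable_mk.enorm.indicator hOB, ?_, fun i => ?_⟩
  · filter_upwards [(ae_restrict_iff' hOB).1 hf.ae_eq_mk] with x hx
    by_cases hxOB : x ∈ O ∩ B
    · rw [indicator_of_mem hxOB, hx hxOB]
    · simp [indicator_of_notMem hxOB]
  by_cases hi : i ∈ D
  · have hsub : U i ∩ B ⊆ O ∩ B := inter_subset_inter_left _ (subset_biUnion_of_mem hi)
    rw [integral_congr_ae (ae_restrict_of_ae_restrict_of_subset hsub hf.ae_eq_mk),
      setLIntegral_congr_fun ((hU i).measurableSet.inter hB) fun y hy =>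
        indicator_of_mem (hsub hy) _]
    exact enorm_integral_le_lintegral_enorm _
  · simp [integral_undef hi]

theorem measurable_measure_ball {X : Type*} [MetricSpace X] [SecondCountableTopology X]
    [MeasurableSpace X] [OpensMeasurableSpace X] (μ : Measure X) [SFinite μ] (r : ℝ) :
    Measurable fun x => μ (ball x r) :=
  measurable_measure_prodMk_left (measurableSet_lt (measurable_snd.dist measurable_fst)
    measurable_const)

theorem enorm_killedOp_le {X : Type*} [MetricSpace X] [MeasurableSpace X]
    [OpensMeasurableSpace X] (μ : Measure X) (r : ℝ) {B : Set X} (hB : MeasurableSet B)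
    {f : X → ℝ} {u : X → ℝ≥0∞}
    (hfu : ∀ x, ‖∫ y in ball x r ∩ B, f y ∂μ‖ₑ ≤ ∫⁻ y in ball x r ∩ B, u y ∂μ) (x : X) :
    ‖killedOp μ r B f x‖ₑ ≤ (μ (ball x r))⁻¹ * ∫⁻ y, killedKernel r B x y * u y ∂μ := by
  rw [lintegral_killedKernel_mul μ r hB]
  by_cases hx : x ∈ B
  · rw [killedOp, indicator_of_mem hx, indicator_of_mem hx, enorm_mul]
    gcongr
    · rw [← ENNReal.toReal_inv, Real.enorm_of_nonneg ENNReal.toReal_nonneg]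
      exact ENNReal.ofReal_toReal_le
    · exact hfu x
  · simp [killedOp, hx]

theorem eLpNorm_two_le_of_lintegral_sq_le {α E F : Type*} [MeasurableSpace α] {μ : Measure α}
    [NormedAddCommGroup E] [NormedAddCommGroup F] {f : α → E} {g : α → F} {c : ℝ≥0∞}
    (h : ∫⁻ x, ‖f x‖ₑ ^ 2 ∂μ ≤ c ^ 2 * ∫⁻ x, ‖g x‖ₑ ^ 2 ∂μ) :
    eLpNorm f 2 μ ≤ c * eLpNorm g 2 μ := by
  have hf : eLpNorm f 2 μ ^ 2 = ∫⁻ x, ‖f x‖ₑ ^ 2 ∂μ := by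
    simpa using eLpNorm_nnreal_pow_eq_lintegral (f := f) (μ := μ) (p := 2) two_ne_zero
  have hg : eLpNorm g 2 μ ^ 2 = ∫⁻ x, ‖g x‖ₑ ^ 2 ∂μ := by
    simpa using eLpNorm_nnreal_pow_eq_lintegral (f := g) (μ := μ) (p := 2) two_ne_zero
  rwa [← ENNReal.pow_le_pow_left_iff two_ne_zero, mul_pow, hf, hg]

theorem eLpNorm_killedOp_le_of_schur {X : Type*} [MetricSpace X] [SecondCountableTopology X]
    [MeasurableSpace X] [OpensMeasurableSpace X] (μ : Measure X) [μ.IsOpenPosMeasure]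
    [IsFiniteMeasure μ] {r : ℝ} (hr : 0 < r) {B : Set X} (hB : MeasurableSet B)
    {h : X → ℝ≥0∞} (hh : Measurable h) (h0 : ∀ x, h x ≠ 0) (htop : ∀ x, h x ≠ ∞) {κ : ℝ≥0∞}
    (hKh : ∀ x, ∫⁻ y, killedKernel r B x y * h y ∂μ ≤ κ * (h x * μ (ball x r))) (f : X → ℝ) :
    eLpNorm (killedOp μ r B f) 2 (muR μ r) ≤ κ * eLpNorm f 2 (muR μ r) := by
  have hw := measurable_measure_ball μ r
  have hw0 : ∀ x, μ (ball x r) ≠ 0 := fun x => isOpen_ball.measure_ne_zero μ (nonempty_ball.2 hr)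
  have hmuR : ∀ F : X → ℝ≥0∞, ∫⁻ x, F x ∂(muR μ r) = ∫⁻ x, μ (ball x r) * F x ∂μ := fun F =>
    lintegral_withDensity_eq_lintegral_mul_non_measurable μ hw
      (ae_of_all _ fun _ => measure_lt_top μ _) F
  obtain ⟨u, hu, huf, hfu⟩ := exists_measurable_enorm_setIntegral_le μ
    (fun x => isOpen_ball (x := x) (ε := r)) hB f
  refine eLpNorm_two_le_of_lintegral_sq_le ?_
  calc ∫⁻ x, ‖killedOp μ r B f x‖ₑ ^ 2 ∂(muR μ r)
      ≤ ∫⁻ x, μ (ball x r) * ((μ (ball x r))⁻¹ * ∫⁻ y, killedKernel r B x y * u y ∂μ) ^ 2 ∂μ := by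
        rw [hmuR]
        gcongr with x
        exact enorm_killedOp_le μ r hB hfu x
    _ ≤ κ ^ 2 * ∫⁻ x, μ (ball x r) * u x ^ 2 ∂μ :=
        lintegral_schur_test (measurable_killedKernel r hB) (killedKernel_comm r B) hh h0 htop hw
          hw0 (fun x => measure_ne_top μ _) hKh hu
    _ ≤ κ ^ 2 * ∫⁻ x, ‖f x‖ₑ ^ 2 ∂(muR μ r) := by
        rw [hmuR]
        gcongr 1
        exact lintegral_mono_ae (huf.mono fun x hx => by gcongr)

theorem exists_killedKernel_schurWeight {X : Type*} [MetricSpace X] [CompactSpace X]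
    [ConnectedSpace X] [MeasurableSpace X] [OpensMeasurableSpace X] (μ : Measure X)
    [μ.IsOpenPosMeasure] [IsFiniteMeasure μ] {r : ℝ} (hr : 0 < r) {B : Set X} (hB : IsClosed B)
    (hBc : Bᶜ.Nonempty) :
    ∃ (h : X → ℝ≥0∞) (κ : ℝ≥0∞), κ < 1 ∧ Measurable h ∧ (∀ x, h x ≠ 0) ∧ (∀ x, h x ≠ ∞) ∧
      ∀ x, ∫⁻ y, killedKernel r B x y * h y ∂μ ≤ κ * (h x * μ (ball x r)) := by
  obtain ⟨z, hz⟩ := hBc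
  obtain ⟨ρ₀, hρ₀, hzB⟩ := Metric.isOpen_iff.1 hB.isOpen_compl z hz
  obtain ⟨ρ, hρ, hρr, hzρ⟩ : ∃ ρ > 0, ρ ≤ r / 4 ∧ ball z ρ ⊆ Bᶜ :=
    ⟨min ρ₀ (r / 4), lt_min hρ₀ (by linarith), min_le_right _ _,
      (ball_subset_ball (min_le_left _ _)).trans hzB⟩
  obtain ⟨n, N, hn, hnN, hn0, hdesc⟩ := exists_hop_level hρ hρr z
  have : Nonempty X := ⟨z⟩
  obtain ⟨α, hα, hαball⟩ := exists_pos_le_measureReal_ball μ hρ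
  have hαM : α ≤ μ.real univ := (hαball z).trans (measureReal_mono (subset_univ _))
  obtain ⟨l, hl0, hl1, hlα⟩ : ∃ l : ℝ, 0 < l ∧ l ≤ 1 ∧ 2 * l * μ.real univ ≤ α := by
    have hM : 0 < μ.real univ := hα.trans_le hαM
    refine ⟨α / (2 * μ.real univ), by positivity, (div_le_one (by positivity)).2 (by linarith),
      le_of_eq (by field_simp)⟩
  refine ⟨schurWeight l n, ENNReal.ofReal (1 - l ^ (N + 1) / 2),
    ENNReal.ofReal_lt_one.2 (by linarith [pow_pos hl0 (N + 1)]), measurable_schurWeight hn,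
    fun x => schurWeight_ne_zero hl0.le hl1, fun x => ENNReal.ofReal_ne_top, fun x => ?_⟩
  rw [lintegral_killedKernel_mul μ r hB.measurableSet]
  by_cases hxB : x ∈ B
  · rw [indicator_of_mem hxB]
    obtain ⟨k, hk⟩ := Nat.exists_eq_succ_of_ne_zero fun h0 => hzρ (hn0 x h0) hxB
    obtain ⟨c, hcx, hc⟩ := hdesc x k hk
    have hlS : 2 * l * μ.real (ball x r) ≤ μ.real (ball c ρ) :=
      ((mul_le_mul_of_nonneg_left (measureReal_mono (subset_univ _)) (by positivity)).trans
        hlα).trans (hαball c)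
    exact (lintegral_mono_set inter_subset_left).trans (setLIntegral_schurWeight_le hl0 hl1
      measurableSet_ball hcx hlS hk (by linarith [hnN x]) hc)
  · rw [indicator_of_notMem hxB]
    exact zero_le

theorem statement16_general {X : Type*} [MetricSpace X] [CompactSpace X] [ConnectedSpace X]
    [MeasurableSpace X] [BorelSpace X]
    (μ : Measure X) [μ.IsOpenPosMeasure] [IsFiniteMeasure μ]
    (r : ℝ) (hr : 0 < r) (x₀ : X) (R : ℝ)
    (hBc : ((Metric.closedBall x₀ R)ᶜ).Nonempty) :
    ∃ c : ℝ≥0∞, c < 1 ∧ ∀ f : X → ℝ,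
      eLpNorm (killedOp μ r (Metric.closedBall x₀ R) f) 2 (muR μ r) ≤
        c * eLpNorm f 2 (muR μ r) := by
  obtain ⟨h, κ, hκ, hh, h0, htop, hKh⟩ :=
    exists_killedKernel_schurWeight μ hr isClosed_closedBall hBc
  exact ⟨κ, hκ, eLpNorm_killedOp_le_of_schur μ hr measurableSet_closedBall hh h0 htop hKh⟩

theorem statement16 {X : Type*} [MetricSpace X] [CompactSpace X] [ConnectedSpace X]
    [Nontrivial X] [MeasurableSpace X] [BorelSpace X]
    (μ : Measure X) [μ.IsOpenPosMeasure] [IsFiniteMeasure μ]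
    (r : ℝ) (hr : 0 < r) (x₀ : X) (R : ℝ)
    (hBc : ((Metric.closedBall x₀ R)ᶜ).Nonempty) :
    ∃ c : ℝ≥0∞, c < 1 ∧ ∀ f : X → ℝ,
      eLpNorm (killedOp μ r (Metric.closedBall x₀ R) f) 2 (muR μ r) ≤
        c * eLpNorm f 2 (muR μ r) :=
  statement16_general μ r hr x₀ R hBc
end

section
/- Suppose E⁺_{r,B} < ∞. Then the bottom of the spectrum of the operator f ↦ f − P^B_r f on L²(μ_r)-functions vanishing outside B is at least c/E⁺_{r,B} for a constant c > 0 independent of r, R and x₀: concretely, for every f ∈ L²(X, μ_r) with f = 0 μ-a.e. outside B, one has ⟨f, f − P^B_r f⟩_{L²(μ_r)} ≥ (c/E⁺_{r,B})·‖f‖²_{L²(μ_r)}. -/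
/- STATEMENT 17: In the setting of r-step random walks on a compact connected metric
   measure space (X,d,μ) with more than one point and μ of full support: there is a
   constant c > 0, independent of r, R and x₀, such that whenever r > 0, the closed
   ball B = B_R[x₀] has non-empty complement, and E⁺_{r,B} < ∞, then for every
   f ∈ L²(μ_r) vanishing μ-a.e. outside B,
   ⟨f, f − P^B_r f⟩_{L²(μ_r)} ≥ (c / E⁺_{r,B}) · ‖f‖²_{L²(μ_r)}. -/

open MeasureTheory Metric ProbabilityTheory
open scoped ENNReal

/-! Let `E x = 𝔼^x τ_B`. First-step analysis shows that `E` vanishes off `B` and solves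
`E = 1 + P^B_r E` on `B`, so `1 ≤ E ≤ E⁺_{r,B}` there. The form `⟨f, P^B_r f⟩_{μ_r}` is the
integral of `f x * f y` against `μ ⊗ μ` restricted to `{d(x, y) < r}`, a swap-invariant measure
with marginals `μ_r`. The weighted AM-GM inequality
`2 f(x) f(y) ≤ f(x)² E(y)/E(x) + f(y)² E(x)/E(y)` (a Schur test with weight `E`) bounds it by
`∫ f² (P^B_r E)/E dμ_r = ∫ f² (1 - 1/E) dμ_r ≤ (1 - 1/E⁺_{r,B}) ‖f‖²`: the claim holds with
`c = 1`. -/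

open Set

section ExitTime

variable {X : Type*} (B : Set X)

def survivalSet (k : ℕ) : Set (ℕ → X) := {ω | ∀ j ≤ k, ω j ∈ B}

lemma survivalSet_succ (k : ℕ) :
    survivalSet B (k + 1) =
      {ω | ω 0 ∈ B} ∩ (fun (ω : ℕ → X) (n : ℕ) => ω (n + 1)) ⁻¹' survivalSet B k := by
  ext ω
  simp only [survivalSet, mem_ofPred_eq, mem_inter_iff, mem_preimage]
  refine ⟨fun h => ⟨h 0 (Nat.zero_le _), fun j hj => h (j + 1) (by omega)⟩, ?_⟩
  rintro ⟨h0, hs⟩ (_ | j) hj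
  · exact h0
  · exact hs j (by omega)

lemma exitTime_eq_tsum_indicator (ω : ℕ → X) :
    exitTime B ω = ∑' k, (survivalSet B k).indicator 1 ω := by
  classical
  by_cases hex : ∃ k, ω k ∉ B
  · have hexit : exitTime B ω = Nat.find hex :=
      le_antisymm (iInf₂_le (Nat.find hex) (Nat.find_spec hex))
        (le_iInf₂ fun k hk => by exact_mod_cast Nat.find_min' hex hk)
    have hmem : ∀ k, ω ∈ survivalSet B k ↔ k < Nat.find hex := fun k => by
      simp [survivalSet, Nat.lt_find_iff]
    rw [hexit, tsum_eq_sum (s := Finset.range (Nat.find hex)) fun k hk => by simp_all,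
      Finset.sum_congr rfl fun k hk => indicator_of_mem ((hmem k).2 (Finset.mem_range.1 hk)) _]
    simp
  · simp_all [exitTime, survivalSet]

variable [MeasurableSpace X]

lemma measurableSet_survivalSet (hB : MeasurableSet B) (k : ℕ) :
    MeasurableSet (survivalSet B k) := by
  simp only [survivalSet, ofPred_forall]
  exact .iInter fun j => .iInter fun _ => measurable_pi_apply j hB

lemma meanExit_eq_tsum (κ : Kernel X (ℕ → X)) (hB : MeasurableSet B) (x : X) :
    meanExit κ B x = ∑' k, κ x (survivalSet B k) := by
  rw [meanExit, lintegral_congr (exitTime_eq_tsum_indicator B), lintegral_tsum fun k =>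
    (measurable_one.indicator (measurableSet_survivalSet B hB k)).aemeasurable]
  exact tsum_congr fun k => lintegral_indicator_one (measurableSet_survivalSet B hB k)

lemma measurable_meanExit (κ : Kernel X (ℕ → X)) (hB : MeasurableSet B) :
    Measurable (meanExit κ B) := by
  simp_rw [funext (meanExit_eq_tsum B κ hB)]
  exact .tsum fun k => κ.measurable_coe (measurableSet_survivalSet B hB k)

end ExitTime

section Walk

variable {X : Type*} [MeasurableSpace X] {B : Set X} {κ : Kernel X (ℕ → X)} [IsMarkovKernel κ]
  {x : X}

lemma ae_eval_zero_eq [MeasurableSingletonClass X] (hstart : ∀ x : X, κ x {ω | ω 0 = x} = 1)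
    (x : X) :
    ∀ᵐ ω ∂(κ x), ω 0 = x := by
  have hmeas : MeasurableSet {ω : ℕ → X | ω 0 = x} :=
    (measurableSet_singleton x).preimage (measurable_pi_apply 0)
  exact ae_iff.2 ((prob_compl_eq_zero_iff hmeas).2 (hstart x))

lemma measure_survivalSet_of_notMem [MeasurableSingletonClass X]
    (hstart : ∀ x : X, κ x {ω | ω 0 = x} = 1) (hx : x ∉ B)
    (k : ℕ) : κ x (survivalSet B k) = 0 :=
  measure_eq_zero_iff_ae_notMem.2 <|
    (ae_eval_zero_eq hstart x).mono fun _ h hω => hx (h ▸ hω 0 (Nat.zero_le k))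

lemma measure_survivalSet_zero_of_mem (hstart : ∀ x : X, κ x {ω | ω 0 = x} = 1) (hx : x ∈ B) :
    κ x (survivalSet B 0) = 1 :=
  le_antisymm prob_le_one <| (hstart x).symm.le.trans <| measure_mono fun _ h j hj => by
    rw [Nat.le_zero.1 hj, h]
    exact hx

lemma meanExit_of_notMem [MeasurableSingletonClass X] (hstart : ∀ x : X, κ x {ω | ω 0 = x} = 1)
    (hB : MeasurableSet B) (hx : x ∉ B) : meanExit κ B x = 0 := by
  simp [meanExit_eq_tsum B κ hB, measure_survivalSet_of_notMem hstart hx]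

variable [MetricSpace X] {μ : Measure X} {r : ℝ}

structure IsBallWalk (μ : Measure X) (r : ℝ) (κ : Kernel X (ℕ → X)) : Prop where
  start : ∀ x, κ x {ω | ω 0 = x} = 1
  shift : ∀ (x : X) (S : Set (ℕ → X)), MeasurableSet S →
    κ x ((fun (ω : ℕ → X) (n : ℕ) => ω (n + 1)) ⁻¹' S) =
      (μ (ball x r))⁻¹ * ∫⁻ y in ball x r, κ y S ∂μ

lemma measure_survivalSet_succ_of_mem [MeasurableSingletonClass X]
    (hκ : IsBallWalk μ r κ) (hB : MeasurableSet B) (hx : x ∈ B) (k : ℕ) :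
    κ x (survivalSet B (k + 1)) =
      (μ (ball x r))⁻¹ * ∫⁻ y in ball x r, κ y (survivalSet B k) ∂μ := by
  rw [survivalSet_succ, ← hκ.shift x _ (measurableSet_survivalSet B hB k)]
  refine measure_congr (inter_ae_eq_right_of_ae_eq_univ (ae_eq_univ.2 ?_))
  exact measure_eq_zero_iff_ae_notMem.2 <|
    (ae_eval_zero_eq hκ.start x).mono fun ω h hω => hω (show ω 0 ∈ B from h ▸ hx)

lemma meanExit_eq_one_add [MeasurableSingletonClass X] (hκ : IsBallWalk μ r κ)
    (hB : MeasurableSet B) (hx : x ∈ B) :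
    meanExit κ B x = 1 + (μ (ball x r))⁻¹ * ∫⁻ y in ball x r, meanExit κ B y ∂μ := by
  simp_rw [meanExit_eq_tsum B κ hB]
  rw [tsum_eq_zero_add' ENNReal.summable, measure_survivalSet_zero_of_mem hκ.start hx,
    lintegral_tsum fun k => (κ.measurable_coe (measurableSet_survivalSet B hB k)).aemeasurable,
    ← ENNReal.tsum_mul_left]
  simp_rw [measure_survivalSet_succ_of_mem hκ hB hx]

lemma one_le_meanExit [MeasurableSingletonClass X] (hκ : IsBallWalk μ r κ)
    (hB : MeasurableSet B) (hx : x ∈ B) : 1 ≤ meanExit κ B x :=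
  (meanExit_eq_one_add hκ hB hx).symm ▸ le_self_add

lemma setIntegral_ball_toReal_meanExit [MeasurableSingletonClass X] [IsFiniteMeasure μ]
    (hκ : IsBallWalk μ r κ)
    (hB : MeasurableSet B) (hfin : ∀ y, meanExit κ B y ≠ ⊤) (hball : μ (ball x r) ≠ 0)
    (hx : x ∈ B) :
    ∫ y in ball x r, (meanExit κ B y).toReal ∂μ =
      (μ (ball x r)).toReal * ((meanExit κ B x).toReal - 1) := by
  have hrec := congrArg (μ (ball x r) * ·) (meanExit_eq_one_add hκ hB hx)
  simp only [mul_add, mul_one, ← mul_assoc, ENNReal.mul_inv_cancel hball (measure_ne_top _ _),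
    one_mul] at hrec
  have hint : ∫⁻ y in ball x r, meanExit κ B y ∂μ ≠ ⊤ := fun htop =>
    ENNReal.mul_ne_top (measure_ne_top _ _) (hfin x) (by rw [hrec, htop, add_top])
  rw [integral_toReal (measurable_meanExit B κ hB).aemeasurable
    (ae_of_all _ fun y => (hfin y).lt_top)]
  have hreal := congrArg ENNReal.toReal hrec
  rw [ENNReal.toReal_mul, ENNReal.toReal_add (measure_ne_top _ _) hint] at hreal
  linarith

end Walk

section PairMeasure

variable {X : Type*} [MetricSpace X]

def ballPairs (r : ℝ) : Set (X × X) := {p | p.2 ∈ ball p.1 r}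

lemma preimage_swap_ballPairs (r : ℝ) :
    Prod.swap ⁻¹' ballPairs r = (ballPairs r : Set (X × X)) := by
  ext p
  exact mem_ball_comm

variable [MeasurableSpace X] [BorelSpace X] (μ : Measure X) (r : ℝ)

noncomputable def pairMeasure : Measure (X × X) := (μ.prod μ).restrict (ballPairs r)

lemma integral_indicator_ballPairs_mk (F : X × X → ℝ) (x : X) :
    ∫ y, (ballPairs r).indicator F (x, y) ∂μ = ∫ y in ball x r, F (x, y) ∂μ := by
  rw [← integral_indicator measurableSet_ball]
  rfl

variable [SecondCountableTopology X]

lemma measurableSet_ballPairs : MeasurableSet (ballPairs r : Set (X × X)) :=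
  measurableSet_lt (measurable_snd.dist measurable_fst) measurable_const

variable [SFinite μ]

lemma measurePreserving_swap_pairMeasure :
    MeasurePreserving Prod.swap (pairMeasure μ r) (pairMeasure μ r) := by
  refine ⟨measurable_swap, ?_⟩
  have h := Measure.restrict_map (μ := μ.prod μ) measurable_swap (measurableSet_ballPairs r)
  rwa [Measure.prod_swap, preimage_swap_ballPairs, eq_comm] at h

lemma measurePreserving_fst_pairMeasure :
    MeasurePreserving Prod.fst (pairMeasure μ r) (muR μ r) := by
  refine ⟨measurable_fst, ?_⟩
  ext s hs
  rw [Measure.map_apply measurable_fst hs, pairMeasure,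
    Measure.restrict_apply (measurable_fst hs),
    Measure.prod_apply ((measurable_fst hs).inter (measurableSet_ballPairs r)), muR,
    withDensity_apply _ hs, ← lintegral_indicator hs]
  refine lintegral_congr fun x => ?_
  by_cases hx : x ∈ s <;> simp [hx, ballPairs, preimage, indicator, Metric.ball]

lemma measurePreserving_snd_pairMeasure :
    MeasurePreserving Prod.snd (pairMeasure μ r) (muR μ r) :=
  (measurePreserving_fst_pairMeasure μ r).comp (measurePreserving_swap_pairMeasure μ r)

variable {μ r}

lemma integral_pairMeasure {F : X × X → ℝ} (hF : Integrable F (pairMeasure μ r)) :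
    ∫ p, F p ∂(pairMeasure μ r) = ∫ x, ∫ y in ball x r, F (x, y) ∂μ ∂μ := by
  rw [pairMeasure, ← integral_indicator (measurableSet_ballPairs r),
    integral_prod _ ((integrable_indicator_iff (measurableSet_ballPairs r)).2 hF)]
  simp_rw [integral_indicator_ballPairs_mk]

lemma integrable_integral_ball {F : X × X → ℝ} (hF : Integrable F (pairMeasure μ r)) :
    Integrable (fun x => ∫ y in ball x r, F (x, y) ∂μ) μ := by
  simp_rw [← integral_indicator_ballPairs_mk]
  exact ((integrable_indicator_iff (measurableSet_ballPairs r)).2 hF).integral_prod_left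

end PairMeasure

lemma two_mul_mul_le_sq_mul_div_add (a b : ℝ) {s t : ℝ} (hs : 0 < s) (ht : 0 < t) :
    2 * (a * b) ≤ a ^ 2 * (t / s) + b ^ 2 * (s / t) := by
  have hgap : a ^ 2 * (t / s) + b ^ 2 * (s / t) - 2 * (a * b) = (a * t - b * s) ^ 2 / (s * t) := by
    field_simp
    ring
  have := div_nonneg (sq_nonneg (a * t - b * s)) (mul_pos hs ht).le
  linarith

lemma integral_le_of_two_mul_le_add_swap {α : Type*} [MeasurableSpace α] {ρ : Measure (α × α)}
    (hρ : MeasurePreserving Prod.swap ρ ρ) {F G : α × α → ℝ} (hF : Integrable F ρ)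
    (hG : Integrable G ρ) (hle : ∀ p, 2 * F p ≤ G p + G p.swap) :
    ∫ p, F p ∂ρ ≤ ∫ p, G p ∂ρ := by
  have hswap : ∫ p, G p.swap ∂ρ = ∫ p, G p ∂ρ :=
    hρ.integral_comp' (f := MeasurableEquiv.prodComm) G
  have hGs : Integrable (fun p => G p.swap) ρ :=
    (hρ.integrable_comp_emb MeasurableEquiv.prodComm.measurableEmbedding).2 hG
  have h := integral_mono (f := fun p => 2 * F p) (g := fun p => G p + G p.swap)
    (hF.const_mul 2) (hG.add hGs) hle
  rw [integral_const_mul, integral_add hG hGs, hswap] at h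
  linarith

section Ratio

variable {X : Type*} {B : Set X} {E h : X → ℝ} {M : ℝ}

lemma two_mul_le_sq_mul_ratio_add_swap (hE0 : ∀ x ∉ B, E x = 0) (hE1 : ∀ x ∈ B, 1 ≤ E x)
    (hh0 : ∀ x ∉ B, h x = 0) (p : X × X) :
    2 * (h p.1 * h p.2) ≤ h p.1 ^ 2 * (E p.2 / E p.1) + h p.2 ^ 2 * (E p.1 / E p.2) := by
  by_cases h₁ : p.1 ∈ B
  · by_cases h₂ : p.2 ∈ B
    · exact two_mul_mul_le_sq_mul_div_add _ _ (by linarith [hE1 _ h₁]) (by linarith [hE1 _ h₂])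
    · simp [hh0 _ h₂, hE0 _ h₂]
  · simp [hh0 _ h₁, hE0 _ h₁]

lemma integrable_sq_mul_ratio [MeasurableSpace X] {ρ : Measure (X × X)} (hEm : Measurable E)
    (hE0 : ∀ x ∉ B, E x = 0) (hE1 : ∀ x ∈ B, 1 ≤ E x) (hEM : ∀ x, E x ≤ M)
    (hh0 : ∀ x ∉ B, h x = 0) (hΦ : Integrable (fun p : X × X => h p.1 ^ 2) ρ) :
    Integrable (fun p : X × X => h p.1 ^ 2 * (E p.2 / E p.1)) ρ := by
  refine (hΦ.const_mul M).mono'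
    (hΦ.1.mul ((hEm.comp measurable_snd).div (hEm.comp measurable_fst)).aestronglyMeasurable)
    (ae_of_all _ fun p => ?_)
  by_cases h₁ : p.1 ∈ B
  · have hE₂ : 0 ≤ E p.2 := by
      by_cases h₂ : p.2 ∈ B
      · linarith [hE1 _ h₂]
      · rw [hE0 _ h₂]
    have hratio : E p.2 / E p.1 ≤ M := (div_le_self hE₂ (hE1 _ h₁)).trans (hEM _)
    rw [Real.norm_eq_abs, abs_of_nonneg
      (mul_nonneg (sq_nonneg _) (div_nonneg hE₂ (by linarith [hE1 _ h₁]))), mul_comm M]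
    exact mul_le_mul_of_nonneg_left hratio (sq_nonneg _)
  · simp [hh0 _ h₁]

end Ratio

section BallAverage

variable {X : Type*} [MetricSpace X] [MeasurableSpace X] {μ : Measure X} {r : ℝ} {B : Set X}

lemma killedOp_congr_ae {f g : X → ℝ} (hfg : f =ᵐ[μ] g) :
    killedOp μ r B f = killedOp μ r B g := by
  unfold killedOp
  congr 1
  funext x
  rw [integral_congr_ae (ae_restrict_of_ae hfg)]

lemma setIntegral_ball_sq_mul_ratio_le {E h : X → ℝ} {M : ℝ} (hE1 : ∀ x ∈ B, 1 ≤ E x)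
    (hEM : ∀ x, E x ≤ M)
    (hharm : ∀ x ∈ B, ∫ y in ball x r, E y ∂μ = (μ (ball x r)).toReal * (E x - 1))
    (hh0 : ∀ x ∉ B, h x = 0) (x : X) :
    ∫ y in ball x r, h x ^ 2 * (E y / E x) ∂μ ≤ ∫ _ in ball x r, (1 - 1 / M) * h x ^ 2 ∂μ := by
  by_cases hx : x ∈ B
  · have hEx : 0 < E x := by linarith [hE1 x hx]
    have hinv : 1 / M ≤ 1 / E x := one_div_le_one_div_of_le hEx (hEM x)
    simp_rw [mul_div_assoc', mul_div_right_comm _ _ (E x)]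
    rw [integral_const_mul, hharm x hx, setIntegral_const, smul_eq_mul, measureReal_def]
    calc h x ^ 2 / E x * ((μ (ball x r)).toReal * (E x - 1))
        = (μ (ball x r)).toReal * h x ^ 2 * (1 - 1 / E x) := by field_simp
      _ ≤ (μ (ball x r)).toReal * h x ^ 2 * (1 - 1 / M) := by gcongr
      _ = (μ (ball x r)).toReal * ((1 - 1 / M) * h x ^ 2) := by ring
  · simp [hh0 x hx]

variable [IsFiniteMeasure μ] [μ.IsOpenPosMeasure]

lemma mul_mul_killedOp_eq (hr : 0 < r) (hB : MeasurableSet B) {h : X → ℝ}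
    (hh0 : ∀ x ∉ B, h x = 0) (x : X) :
    (μ (ball x r)).toReal * (h x * killedOp μ r B h x) = ∫ y in ball x r, h x * h y ∂μ := by
  by_cases hx : x ∈ B
  · have hm : (μ (ball x r)).toReal ≠ 0 :=
      ENNReal.toReal_ne_zero.2 ⟨(measure_ball_pos μ x hr).ne', measure_ne_top _ _⟩
    have hind : B.indicator h = h :=
      indicator_eq_self.2 fun y hy => by_contra fun hyB => hy (hh0 y hyB)
    rw [killedOp, indicator_of_mem hx, ← setIntegral_indicator hB, hind, integral_const_mul]
    field_simp
  · simp [hh0 x hx]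

end BallAverage

section SpectralGap

variable {X : Type*} [MetricSpace X] [SecondCountableTopology X] [MeasurableSpace X]
  [BorelSpace X] {μ : Measure X} [IsFiniteMeasure μ] {r : ℝ}

lemma measurable_measure_ball_s17 : Measurable fun x => μ (ball x r) :=
  measurable_measure_prodMk_left (measurableSet_ballPairs r)

lemma integral_muR (φ : X → ℝ) :
    ∫ x, φ x ∂(muR μ r) = ∫ x, (μ (ball x r)).toReal * φ x ∂μ :=
  integral_withDensity_eq_integral_toReal_smul measurable_measure_ball_s17
    (ae_of_all _ fun _ => measure_lt_top _ _) φ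

lemma integrable_muR_iff {φ : X → ℝ} :
    Integrable φ (muR μ r) ↔ Integrable (fun x => (μ (ball x r)).toReal * φ x) μ :=
  integrable_withDensity_iff_integrable_smul' measurable_measure_ball_s17
    (ae_of_all _ fun _ => measure_lt_top _ _)

lemma integrable_mul_pairMeasure {h : X → ℝ} (hh : MemLp h 2 (muR μ r)) :
    Integrable (fun p : X × X => h p.1 * h p.2) (pairMeasure μ r) :=
  (hh.comp_measurePreserving (measurePreserving_fst_pairMeasure μ r)).integrable_mul
    (hh.comp_measurePreserving (measurePreserving_snd_pairMeasure μ r))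

variable [μ.IsOpenPosMeasure] {B : Set X} {h : X → ℝ}

lemma integral_mul_killedOp_eq (hr : 0 < r) (hB : MeasurableSet B) (hh0 : ∀ x ∉ B, h x = 0)
    (hh : MemLp h 2 (muR μ r)) :
    ∫ x, h x * killedOp μ r B h x ∂(muR μ r) = ∫ p, h p.1 * h p.2 ∂(pairMeasure μ r) := by
  rw [integral_muR, integral_pairMeasure (integrable_mul_pairMeasure hh)]
  simp_rw [mul_mul_killedOp_eq hr hB hh0]

lemma integrable_mul_killedOp (hr : 0 < r) (hB : MeasurableSet B) (hh0 : ∀ x ∉ B, h x = 0)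
    (hh : MemLp h 2 (muR μ r)) : Integrable (fun x => h x * killedOp μ r B h x) (muR μ r) := by
  rw [integrable_muR_iff]
  simp_rw [mul_mul_killedOp_eq hr hB hh0]
  exact integrable_integral_ball (integrable_mul_pairMeasure hh)

variable {E : X → ℝ} {M : ℝ}

lemma integral_mul_killedOp_le (hr : 0 < r) (hB : MeasurableSet B) (hEm : Measurable E)
    (hE0 : ∀ x ∉ B, E x = 0) (hE1 : ∀ x ∈ B, 1 ≤ E x) (hEM : ∀ x, E x ≤ M)
    (hharm : ∀ x ∈ B, ∫ y in ball x r, E y ∂μ = (μ (ball x r)).toReal * (E x - 1))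
    (hh0 : ∀ x ∉ B, h x = 0) (hh : MemLp h 2 (muR μ r)) :
    ∫ x, h x * killedOp μ r B h x ∂(muR μ r) ≤ (1 - 1 / M) * ∫ x, h x ^ 2 ∂(muR μ r) := by
  have hfst := measurePreserving_fst_pairMeasure μ r
  have hΦ : Integrable (fun p : X × X => h p.1 ^ 2) (pairMeasure μ r) :=
    (hh.comp_measurePreserving hfst).integrable_sq
  have hG := integrable_sq_mul_ratio hEm hE0 hE1 hEM hh0 hΦ
  have hsq : ∫ p, h p.1 ^ 2 ∂(pairMeasure μ r) = ∫ x, h x ^ 2 ∂(muR μ r) := by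
    rw [← hfst.map_eq, integral_map measurable_fst.aemeasurable]
    simpa only [hfst.map_eq] using hh.integrable_sq.aestronglyMeasurable
  calc ∫ x, h x * killedOp μ r B h x ∂(muR μ r)
      ≤ ∫ p, h p.1 ^ 2 * (E p.2 / E p.1) ∂(pairMeasure μ r) := by
        rw [integral_mul_killedOp_eq hr hB hh0 hh]
        exact integral_le_of_two_mul_le_add_swap (measurePreserving_swap_pairMeasure μ r)
          (integrable_mul_pairMeasure hh) hG (two_mul_le_sq_mul_ratio_add_swap hE0 hE1 hh0)
    _ ≤ ∫ p, (1 - 1 / M) * h p.1 ^ 2 ∂(pairMeasure μ r) := by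
        rw [integral_pairMeasure hG, integral_pairMeasure (hΦ.const_mul _)]
        exact integral_mono (integrable_integral_ball hG)
          (integrable_integral_ball (hΦ.const_mul _))
          (setIntegral_ball_sq_mul_ratio_le hE1 hEM hharm hh0)
    _ = (1 - 1 / M) * ∫ x, h x ^ 2 ∂(muR μ r) := by rw [integral_const_mul, hsq]

theorem one_div_mul_integral_sq_le_integral_mul_sub_killedOp (hr : 0 < r)
    (hB : MeasurableSet B) (hEm : Measurable E)
    (hE0 : ∀ x ∉ B, E x = 0) (hE1 : ∀ x ∈ B, 1 ≤ E x) (hEM : ∀ x, E x ≤ M)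
    (hharm : ∀ x ∈ B, ∫ y in ball x r, E y ∂μ = (μ (ball x r)).toReal * (E x - 1))
    {f : X → ℝ} (hf : MemLp f 2 (muR μ r)) (hfB : ∀ᵐ x ∂μ, x ∉ B → f x = 0) :
    1 / M * ∫ x, f x ^ 2 ∂(muR μ r) ≤ ∫ x, f x * (f x - killedOp μ r B f x) ∂(muR μ r) := by
  set h := B.indicator f
  have hfh : f =ᵐ[μ] h := hfB.mono fun x hx => by by_cases hxB : x ∈ B <;> simp [h, hxB, hx]
  have hfh' : f =ᵐ[muR μ r] h := (withDensity_absolutelyContinuous _ _).ae_eq hfh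
  have hh0 : ∀ x ∉ B, h x = 0 := fun x hx => indicator_of_notMem hx f
  have hh : MemLp h 2 (muR μ r) := hf.ae_eq hfh'
  have hsq : ∫ x, f x ^ 2 ∂(muR μ r) = ∫ x, h x ^ 2 ∂(muR μ r) :=
    integral_congr_ae (hfh'.mono fun x hx => by simp only [hx])
  have hform : ∫ x, f x * (f x - killedOp μ r B f x) ∂(muR μ r) =
      ∫ x, h x * (h x - killedOp μ r B h x) ∂(muR μ r) := by
    rw [killedOp_congr_ae hfh]
    exact integral_congr_ae (hfh'.mono fun x hx => by simp only [hx])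
  rw [hsq, hform]
  have hsplit : ∫ x, h x * (h x - killedOp μ r B h x) ∂(muR μ r) =
      ∫ x, h x ^ 2 ∂(muR μ r) - ∫ x, h x * killedOp μ r B h x ∂(muR μ r) := by
    rw [← integral_sub hh.integrable_sq (integrable_mul_killedOp hr hB hh0 hh)]
    congr 1 with x
    ring
  linarith [integral_mul_killedOp_le hr hB hEm hE0 hE1 hEM hharm hh0 hh]

end SpectralGap

theorem statement17_general {X : Type*} [MetricSpace X] [CompactSpace X]
    [MeasurableSpace X] [BorelSpace X]
    (μ : Measure X) [μ.IsOpenPosMeasure] [IsFiniteMeasure μ]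
    (P : ℝ → Kernel X (ℕ → X)) (hmk : ∀ r : ℝ, IsMarkovKernel (P r))
    (hstart : ∀ (r : ℝ), 0 < r → ∀ x : X, P r x {ω | ω 0 = x} = 1)
    (hshift : ∀ (r : ℝ), 0 < r → ∀ (x : X) (S : Set (ℕ → X)), MeasurableSet S →
      P r x ((fun (ω : ℕ → X) (n : ℕ) => ω (n + 1)) ⁻¹' S) =
        (μ (Metric.ball x r))⁻¹ * ∫⁻ y in Metric.ball x r, P r y S ∂μ) :
    ∃ c : ℝ, 0 < c ∧ ∀ (r R : ℝ) (x₀ : X), 0 < r →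
      ((Metric.closedBall x₀ R)ᶜ).Nonempty →
      maxExit (P r) (Metric.closedBall x₀ R) ≠ ⊤ →
      ∀ f : X → ℝ, MemLp f 2 (muR μ r) →
        (∀ᵐ x ∂μ, x ∉ Metric.closedBall x₀ R → f x = 0) →
        c / (maxExit (P r) (Metric.closedBall x₀ R)).toReal * ∫ x, f x ^ 2 ∂(muR μ r) ≤
          ∫ x, f x * (f x - killedOp μ r (Metric.closedBall x₀ R) f x) ∂(muR μ r) := by
  refine ⟨1, one_pos, fun r R x₀ hr _ hmax f hf hfB => ?_⟩
  set B := closedBall x₀ R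
  have hB : MeasurableSet B := measurableSet_closedBall
  have := hmk r
  have hwalk : IsBallWalk μ r (P r) := ⟨hstart r hr, hshift r hr⟩
  have hout : ∀ x ∉ B, meanExit (P r) B x = 0 := fun x hx =>
    meanExit_of_notMem hwalk.start hB hx
  have hle : ∀ x, meanExit (P r) B x ≤ maxExit (P r) B := fun x => by
    by_cases hx : x ∈ B
    · exact le_biSup (meanExit (P r) B) hx
    · simp [hout x hx]
  have hfin : ∀ x, meanExit (P r) B x ≠ ⊤ := fun x => ne_top_of_le_ne_top hmax (hle x)
  have hone : ∀ x ∈ B, 1 ≤ (meanExit (P r) B x).toReal := fun x hx => by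
    simpa using ENNReal.toReal_mono (hfin x) (one_le_meanExit hwalk hB hx)
  exact one_div_mul_integral_sq_le_integral_mul_sub_killedOp hr hB
    (measurable_meanExit B (P r) hB).ennreal_toReal (fun x hx => by simp [hout x hx]) hone
    (fun x => ENNReal.toReal_mono hmax (hle x))
    (fun x hx => setIntegral_ball_toReal_meanExit hwalk hB hfin (measure_ball_pos μ x hr).ne' hx)
    hf hfB

theorem statement17 {X : Type*} [MetricSpace X] [CompactSpace X] [ConnectedSpace X]
    [Nontrivial X] [MeasurableSpace X] [BorelSpace X]
    (μ : Measure X) [μ.IsOpenPosMeasure] [IsFiniteMeasure μ]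
    (P : ℝ → Kernel X (ℕ → X)) (hmk : ∀ r : ℝ, IsMarkovKernel (P r))
    (hstart : ∀ (r : ℝ), 0 < r → ∀ x : X, P r x {ω | ω 0 = x} = 1)
    (hshift : ∀ (r : ℝ), 0 < r → ∀ (x : X) (S : Set (ℕ → X)), MeasurableSet S →
      P r x ((fun (ω : ℕ → X) (n : ℕ) => ω (n + 1)) ⁻¹' S) =
        (μ (Metric.ball x r))⁻¹ * ∫⁻ y in Metric.ball x r, P r y S ∂μ) :
    ∃ c : ℝ, 0 < c ∧ ∀ (r R : ℝ) (x₀ : X), 0 < r →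
      ((Metric.closedBall x₀ R)ᶜ).Nonempty →
      maxExit (P r) (Metric.closedBall x₀ R) ≠ ⊤ →
      ∀ f : X → ℝ, MemLp f 2 (muR μ r) →
        (∀ᵐ x ∂μ, x ∉ Metric.closedBall x₀ R → f x = 0) →
        c / (maxExit (P r) (Metric.closedBall x₀ R)).toReal * ∫ x, f x ^ 2 ∂(muR μ r) ≤
          ∫ x, f x * (f x - killedOp μ r (Metric.closedBall x₀ R) f x) ∂(muR μ r) :=
  statement17_general μ P hmk hstart hshift
end
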